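/- arXiv:1003.4673 — 13 statements merged into one kernel-verified Lean document; each statement's English description precedes it below -/
import Mathlib

section
/- Let A, B ⊆ ℝ be Lebesgue-measurable sets, and let a be a Lebesgue density point of A and b a density point of B, with a, b > 0. Then there exist sequences of positive rationals (qₙ) and points aₙ ∈ A, bₙ ∈ B with aₙ → a and bₙ → b such that bₙ = qₙ · aₙ for all n. -/
/-!
Take a rational `q` slightly above `b / a` and a small ball `ball b r`. Since `a` is a density
point of `A`, the dilate `q • (A ∩ ball a ρ)` with `ρ ≈ r / (2 q)` lies in `ball b r` and covers
more than a third of it; since `b` is a density point of `B`, the set `B` covers more than two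
thirds of it. So the two sets meet, giving `x ∈ A` near `a` with `q * x ∈ B` near `b`.
-/

open MeasureTheory Filter Set Topology

/-- `x` is a Lebesgue density point of `T`. -/
def IsDensityPoint (T : Set ℝ) (x : ℝ) : Prop :=
  Tendsto (fun δ : ℝ => volume (T ∩ Ioo (x - δ / 2) (x + δ / 2)) / ENNReal.ofReal δ)
    (𝓝[>] 0) (𝓝 1)

open Metric
open scoped Pointwise

theorem IsDensityPoint.eventually_lt_measure_inter_ball {T : Set ℝ} {x : ℝ}
    (h : IsDensityPoint T x) {c : ℝ} (hc : c < 1) :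
    ∀ᶠ r in 𝓝[>] 0, ENNReal.ofReal (c * (2 * r)) < volume (T ∩ ball x r) := by
  have hδ : ∀ᶠ δ in 𝓝[>] (0 : ℝ),
      ENNReal.ofReal (c * δ) < volume (T ∩ Ioo (x - δ / 2) (x + δ / 2)) := by
    filter_upwards [h.eventually (lt_mem_nhds (ENNReal.ofReal_lt_one.2 hc)), self_mem_nhdsWithin]
      with δ hlt (hδ : 0 < δ)
    rwa [ENNReal.lt_div_iff_mul_lt (by simp [hδ]) (Or.inl ENNReal.ofReal_ne_top),
      ← ENNReal.ofReal_mul' hδ.le] at hlt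
  filter_upwards [eventually_nhdsGT_zero_mul_left two_pos hδ] with r hr
  simpa [Real.ball_eq_Ioo] using hr

theorem exists_rat_mul_mem_inter_ball {A B : Set ℝ} (hB : MeasurableSet B) {a b r : ℝ}
    (ha : 0 < a) (hb : 0 < b) (hr : 0 < r) (hrb : r < b)
    (hAρ : ENNReal.ofReal (2 / 3 * (2 * (a / (2 * b) * r))) <
      volume (A ∩ ball a (a / (2 * b) * r)))
    (hBr : ENNReal.ofReal (2 / 3 * (2 * r)) < volume (B ∩ ball b r)) :
    ∃ q : ℚ, 0 < q ∧ ∃ x ∈ A ∩ ball a (a / (2 * b) * r), (q : ℝ) * x ∈ B ∩ ball b r := by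
  set ρ := a / (2 * b) * r
  obtain ⟨q, hq_lo, hq_hi⟩ := exists_rat_btwn
    (show b / a < (b + r / 4) / a by gcongr; linarith)
  rw [div_lt_iff₀ ha] at hq_lo
  rw [lt_div_iff₀ ha] at hq_hi
  have hq : (0 : ℝ) < q := pos_of_mul_pos_left (hb.trans hq_lo) ha.le
  have hqρ : q * ρ = q * a * r / (2 * b) := by ring
  have hqρ_lo : r / 2 ≤ q * ρ := by
    rw [hqρ, le_div_iff₀ (by positivity)]; nlinarith
  have hqρ_hi : q * ρ ≤ 5 / 8 * r := by
    rw [hqρ, div_le_iff₀ (by positivity)]; nlinarith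
  set S := (q : ℝ) • (A ∩ ball a ρ)
  have hS_sub : S ⊆ ball b r :=
    calc S ⊆ (q : ℝ) • ball a ρ := smul_set_mono inter_subset_right
      _ = ball (q * a) (q * ρ) := by
        rw [_root_.smul_ball hq.ne', Real.norm_of_nonneg hq.le, smul_eq_mul]
      _ ⊆ ball b r := ball_subset_ball' (by rw [Real.dist_eq, abs_of_pos (by linarith)]; linarith)
  have hS_vol : ENNReal.ofReal (q * (2 / 3 * (2 * ρ))) < volume S := by
    rw [Measure.addHaar_smul_of_nonneg _ hq.le, Module.finrank_self, pow_one,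
      ENNReal.ofReal_mul hq.le]
    exact ENNReal.mul_lt_mul_right (by simpa using hq) ENNReal.ofReal_ne_top hAρ
  have hvol : volume (ball b r) < volume S + volume (B ∩ ball b r) :=
    calc volume (ball b r)
        ≤ ENNReal.ofReal (q * (2 / 3 * (2 * ρ))) + ENNReal.ofReal (2 / 3 * (2 * r)) := by
          rw [Real.volume_ball, ← ENNReal.ofReal_add (by positivity) (by positivity)]
          exact ENNReal.ofReal_le_ofReal (by linarith)
      _ < volume S + volume (B ∩ ball b r) := ENNReal.add_lt_add hS_vol hBr
  obtain ⟨y, hyS, hyB⟩ :=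
    nonempty_inter_of_measure_lt_add _ (hB.inter measurableSet_ball) hS_sub inter_subset_right hvol
  obtain ⟨x, hx, rfl⟩ := mem_smul_set.1 hyS
  exact ⟨q, by exact_mod_cast hq, x, hx, hyB⟩

theorem mem_closure_setOf_rat_mul {A B : Set ℝ} (hB : MeasurableSet B) {a b : ℝ}
    (ha : 0 < a) (hb : 0 < b) (hda : IsDensityPoint A a) (hdb : IsDensityPoint B b) :
    (a, b) ∈ closure {p : ℝ × ℝ | p.1 ∈ A ∧ p.2 ∈ B ∧ ∃ q : ℚ, 0 < q ∧ p.2 = q * p.1} := by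
  rw [Metric.mem_closure_iff]
  intro ε hε
  have hκ : 0 < a / (2 * b) := by positivity
  have hsmall : ∀ᶠ r in 𝓝[>] (0 : ℝ), r < min b ε :=
    nhdsWithin_le_nhds (eventually_lt_nhds (lt_min hb hε))
  obtain ⟨r, hr, hr_small, hκr_small, hAr, hBr⟩ := (eventually_mem_nhdsWithin.and <| hsmall.and <|
    (eventually_nhdsGT_zero_mul_left hκ hsmall).and <|
    (eventually_nhdsGT_zero_mul_left hκ (hda.eventually_lt_measure_inter_ball (c := 2 / 3)
      (by norm_num))).and (hdb.eventually_lt_measure_inter_ball (c := 2 / 3) (by norm_num))).exists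
  obtain ⟨q, hq, x, ⟨hxA, hxa⟩, hyB, hyb⟩ :=
    exists_rat_mul_mem_inter_ball hB ha hb hr (hr_small.trans_le (min_le_left _ _)) hAr hBr
  refine ⟨(x, q * x), ⟨hxA, hyB, q, hq, rfl⟩, ?_⟩
  rw [Prod.dist_eq, dist_comm a, dist_comm b]
  exact max_lt (hxa.trans (hκr_small.trans_le (min_le_right _ _)))
    (hyb.trans (hr_small.trans_le (min_le_right _ _)))

theorem stmt_0_general (A B : Set ℝ) (hB : MeasurableSet B)
    (a b : ℝ) (ha : 0 < a) (hb : 0 < b)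
    (hda : IsDensityPoint A a) (hdb : IsDensityPoint B b) :
    ∃ (q : ℕ → ℚ) (as bs : ℕ → ℝ),
      (∀ n, 0 < q n) ∧ (∀ n, as n ∈ A) ∧ (∀ n, bs n ∈ B) ∧
      Tendsto as atTop (𝓝 a) ∧ Tendsto bs atTop (𝓝 b) ∧
      ∀ n, bs n = (q n : ℝ) * as n := by
  obtain ⟨p, hp, hlim⟩ := mem_closure_iff_seq_limit.1 (mem_closure_setOf_rat_mul hB ha hb hda hdb)
  choose q hq hpq using fun n => (hp n).2.2
  exact ⟨q, fun n => (p n).1, fun n => (p n).2, hq, fun n => (hp n).1, fun n => (hp n).2.1,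
    (continuous_fst.tendsto _).comp hlim, (continuous_snd.tendsto _).comp hlim, hpq⟩

theorem stmt_0 (A B : Set ℝ) (hA : MeasurableSet A) (hB : MeasurableSet B)
    (a b : ℝ) (ha : 0 < a) (hb : 0 < b)
    (hda : IsDensityPoint A a) (hdb : IsDensityPoint B b) :
    ∃ (q : ℕ → ℚ) (as bs : ℕ → ℝ),
      (∀ n, 0 < q n) ∧ (∀ n, as n ∈ A) ∧ (∀ n, bs n ∈ B) ∧
      Tendsto as atTop (𝓝 a) ∧ Tendsto bs atTop (𝓝 b) ∧
      ∀ n, bs n = (q n : ℝ) * as n :=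
  stmt_0_general A B hB a b ha hb hda hdb
end

section
/- Let S ⊆ ℝ be a set with the Baire property that is essentially unbounded in the category sense, i.e. S ∩ (m,∞) is non-meagre for every m ∈ ℕ. Then there exist an open set G, unbounded on the right with G ∩ (m,∞) ≠ ∅ for all m, and a meagre set M, such that G \ M ⊆ S. -/
open Filter Set Topology

theorem stmt_2 (S : Set ℝ) (hS : BaireMeasurableSet S)
    (hUnb : ∀ m : ℕ, ¬ IsMeagre (S ∩ Ioi (m : ℝ))) :
    ∃ (G M : Set ℝ), IsOpen G ∧ (∀ m : ℕ, (G ∩ Ioi (m : ℝ)).Nonempty) ∧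
      IsMeagre M ∧ G \ M ⊆ S := by
  obtain ⟨u, huo, hsu⟩ := hS.residualEq_isOpen
  have hmeag : IsMeagre {x | ¬ (x ∈ S ↔ x ∈ u)} := by
    rw [IsMeagre]
    have : {x | ¬ (x ∈ S ↔ x ∈ u)}ᶜ = {x | x ∈ S ↔ x ∈ u} := by
      rw [compl_setOf]; simp only [not_not]
    rw [this]
    filter_upwards [hsu] with x hx
    exact iff_of_eq hx
  refine ⟨u, {x | ¬ (x ∈ S ↔ x ∈ u)}, huo, ?_, hmeag, ?_⟩
  · intro m
    by_contra h
    rw [not_nonempty_iff_eq_empty] at h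
    apply hUnb m
    apply hmeag.mono
    intro x ⟨hxS, hxm⟩
    simp only [mem_setOf_eq]
    intro hiff
    have : x ∈ u ∩ Ioi (m : ℝ) := ⟨hiff.1 hxS, hxm⟩
    rw [h] at this
    exact this
  · rintro x ⟨hxu, hxM⟩
    simp only [mem_setOf_eq, not_not] at hxM
    exact hxM.2 hxu
end

section
/- Let A ⊆ (0,∞) be a Lebesgue-measurable set of positive measure all of whose points are density points (a nonempty density-open set), and let j be a positive rational. Then the set U_j(A) = ⋃_{q ∈ ℚ, q ≥ j} q·A contains almost all points (with respect to Lebesgue measure) of some infinite half-line (c,∞); in particular U_j(A) meets every essentially unbounded measurable set. -/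
/-!
Fix `a ∈ A`, so `a > 0`, and let `x > max (j a) 0`. For small `δ` pick a rational `q ≥ j` with
`|q a - x| ≤ q δ / 4`. Dilation by `q` scales Lebesgue measure by `q`, and `a` is a density point
of `A`, so `q • (A ∩ (a - δ/2, a + δ/2)) ⊆ U_j(A)` fills at least half of the ball of radius
`3 q δ / 4` about `x`. Thus `U_j(A)` has upper density at least `1/2` at every such `x`, while by
the Lebesgue density theorem almost every point outside `U_j(A)` is a point of density `0` of it.
-/

open MeasureTheory Filter Set Topology

open Metric ENNReal
open scoped Pointwise

theorem measure_diff_eq_zero_of_frequently_le_measure_inter_div {α : Type*}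
    [MetricSpace α] [MeasurableSpace α] [BorelSpace α] [SecondCountableTopology α]
    [HasBesicovitchCovering α] (μ : Measure α) [IsLocallyFiniteMeasure μ] {U s : Set α}
    (hU : MeasurableSet U) {c : ℝ≥0∞} (hc : 0 < c)
    (h : ∀ x ∈ s, ∃ᶠ r in 𝓝[>] 0, c ≤ μ (U ∩ closedBall x r) / μ (closedBall x r)) :
    μ (s \ U) = 0 := by
  refine ae_le_set.1 ?_
  filter_upwards [Besicovitch.ae_tendsto_measure_inter_div_of_measurableSet μ hU] with x hx hxs
  by_contra hxU
  rw [indicator_of_notMem hxU] at hx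
  obtain ⟨r, hcr, hr⟩ := ((h x hxs).and_eventually (hx.eventually (gt_mem_nhds hc))).exists
  exact hr.not_ge hcr

theorem IsDensityPoint.eventually_mul_lt {A : Set ℝ} {a : ℝ} (ha : IsDensityPoint A a)
    {c : ℝ≥0∞} (hc : c < 1) :
    ∀ᶠ δ in 𝓝[>] 0, c * ENNReal.ofReal δ < volume (A ∩ Ioo (a - δ / 2) (a + δ / 2)) :=
  (ha.eventually (lt_mem_nhds hc)).mono fun _ hδ => mul_lt_of_lt_div hδ

theorem Real.volume_image_mul_left {q : ℝ} (hq : 0 ≤ q) (s : Set ℝ) :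
    volume ((q * ·) '' s) = ENNReal.ofReal q * volume s := by
  show volume (q • s) = _
  simp [Measure.addHaar_smul_of_nonneg volume hq]

theorem image_mul_left_Ioo_subset_closedBall {q a x δ : ℝ} (hq : 0 < q)
    (hx : |q * a - x| ≤ q * δ / 4) :
    (q * ·) '' Ioo (a - δ / 2) (a + δ / 2) ⊆ closedBall x (3 / 4 * q * δ) := by
  rw [image_mul_left_Ioo hq]
  rintro y ⟨hy₁, hy₂⟩
  rw [abs_le] at hx
  rw [mem_closedBall, Real.dist_eq, abs_le]
  constructor <;> nlinarith

theorem exists_rat_ge_mul_sub_lt_lt_mul_add {a x ε : ℝ} (j : ℚ) (hx : 0 < x) (hε : 0 < ε)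
    (hεa : ε < a) (hjx : j * a < x) : ∃ q : ℚ, j ≤ q ∧ q * (a - ε) < x ∧ x < q * (a + ε) := by
  have hj : (j : ℝ) < x / (a - ε) := by
    rw [lt_div_iff₀ (by linarith)]
    rcases le_or_gt (j : ℝ) 0 with hj | hj <;> nlinarith
  obtain ⟨q, hq₁, hq₂⟩ :=
    exists_rat_btwn (max_lt hj (div_lt_div_of_pos_left hx (by linarith : 0 < a - ε)
      (by linarith : a - ε < a + ε)))
  rw [max_lt_iff] at hq₁
  exact ⟨q, by exact_mod_cast hq₁.1.le, (lt_div_iff₀ (by linarith)).1 hq₂,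
    (div_lt_iff₀ (by linarith)).1 hq₁.2⟩

/-- The set `U_j(A)`. -/
def rationalDilates (A : Set ℝ) (j : ℚ) : Set ℝ :=
  ⋃ (q : ℚ) (_ : j ≤ q), (fun x => (q : ℝ) * x) '' A

theorem measurableSet_rationalDilates {A : Set ℝ} (hA : MeasurableSet A) (j : ℚ) :
    MeasurableSet (rationalDilates A j) :=
  .iUnion fun q => .iUnion fun _ => hA.const_smul₀ (q : ℝ)

theorem IsDensityPoint.frequently_inv_two_le_density_rationalDilates {A : Set ℝ} {a x : ℝ}
    {j : ℚ} (ha : 0 < a) (hda : IsDensityPoint A a) (hx : 0 < x) (hjx : j * a < x) :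
    ∃ᶠ r in 𝓝[>] 0,
      2⁻¹ ≤ volume (rationalDilates A j ∩ closedBall x r) / volume (closedBall x r) := by
  rw [(nhdsGT_basis 0).frequently_iff]
  intro η hη
  -- `q < x / (a - δ / 4) < 4 x / (3 a)`, so `δ x < η a / 2` keeps the radius `3 q δ / 4` below `η`
  have hsmall : ∀ᶠ δ in 𝓝[>] (0 : ℝ), 0 < δ ∧ δ < a ∧ δ * x < η * a / 2 :=
    Filter.Eventually.mono (Ioo_mem_nhdsGT (lt_min ha (by positivity : 0 < η * a / 2 / x)))
      fun δ hδ => ⟨hδ.1, hδ.2.trans_le (min_le_left _ _),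
        (lt_div_iff₀ hx).1 (hδ.2.trans_le (min_le_right _ _))⟩
  obtain ⟨δ, hδA, hδ₀, hδa, hδη⟩ :=
    ((hda.eventually_mul_lt (ENNReal.ofReal_lt_one.2 (by norm_num : (3 / 4 : ℝ) < 1))).and
      hsmall).exists
  obtain ⟨q, hjq, hlo, hhi⟩ :=
    exists_rat_ge_mul_sub_lt_lt_mul_add j hx (by linarith : 0 < δ / 4) (by linarith) hjx
  have hq₀ : (0 : ℝ) < q := by nlinarith
  refine ⟨3 / 4 * q * δ, ⟨by positivity, by nlinarith⟩, ?_⟩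
  have hsub : (fun y => (q : ℝ) * y) '' (A ∩ Ioo (a - δ / 2) (a + δ / 2)) ⊆
      rationalDilates A j ∩ closedBall x (3 / 4 * q * δ) :=
    (image_inter_subset _ _ _).trans <| inter_subset_inter
      (subset_biUnion_of_mem (u := fun q : ℚ => (fun y => (q : ℝ) * y) '' A) hjq)
      (image_mul_left_Ioo_subset_closedBall hq₀ (abs_le.2 ⟨by linarith, by linarith⟩))
  have hvol : ENNReal.ofReal (3 / 4 * q * δ) ≤
      volume (rationalDilates A j ∩ closedBall x (3 / 4 * q * δ)) :=
    calc ENNReal.ofReal (3 / 4 * q * δ)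
        = ENNReal.ofReal q * (ENNReal.ofReal (3 / 4) * ENNReal.ofReal δ) := by
          rw [← ENNReal.ofReal_mul (by norm_num), ← ENNReal.ofReal_mul hq₀.le]; ring_nf
      _ ≤ ENNReal.ofReal q * volume (A ∩ Ioo (a - δ / 2) (a + δ / 2)) := by gcongr
      _ = volume ((fun y => (q : ℝ) * y) '' (A ∩ Ioo (a - δ / 2) (a + δ / 2))) :=
          (Real.volume_image_mul_left hq₀.le _).symm
      _ ≤ _ := measure_mono hsub
  rw [Real.volume_closedBall,
    ENNReal.le_div_iff_mul_le (.inl (by simp; positivity)) (.inl ofReal_ne_top)]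
  calc 2⁻¹ * ENNReal.ofReal (2 * (3 / 4 * q * δ)) = ENNReal.ofReal (3 / 4 * q * δ) := by
        rw [ENNReal.ofReal_mul zero_le_two, ENNReal.ofReal_ofNat, ← mul_assoc,
          ENNReal.inv_mul_cancel two_ne_zero ofNat_ne_top, one_mul]
    _ ≤ _ := hvol

theorem stmt_5_general (A : Set ℝ) (hA₀ : A ⊆ Ioi 0) (hA : MeasurableSet A)
    (hpos : 0 < volume A) (hd : ∀ x ∈ A, IsDensityPoint A x)
    (j : ℚ) :
    (∃ c : ℝ, volume (Ioi c \ ⋃ (q : ℚ) (_ : j ≤ q), (fun x => (q : ℝ) * x) '' A) = 0) ∧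
    ∀ S : Set ℝ, S ⊆ Ioi 0 → MeasurableSet S →
      (∀ m : ℕ, 0 < volume (S ∩ Ioi (m : ℝ))) →
      (S ∩ ⋃ (q : ℚ) (_ : j ≤ q), (fun x => (q : ℝ) * x) '' A).Nonempty := by
  obtain ⟨a, haA⟩ := nonempty_of_measure_ne_zero hpos.ne'
  have hnull : volume (Ioi (max (j * a) 0) \ rationalDilates A j) = 0 :=
    measure_diff_eq_zero_of_frequently_le_measure_inter_div volume
      (measurableSet_rationalDilates hA j) (by norm_num) fun x hx =>
        (hd a haA).frequently_inv_two_le_density_rationalDilates (hA₀ haA)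
          ((le_max_right _ _).trans_lt hx) ((le_max_left _ _).trans_lt hx)
  refine ⟨⟨_, hnull⟩, fun S _ _ hS => ?_⟩
  obtain ⟨m, hm⟩ := exists_nat_ge (max (j * a : ℝ) 0)
  by_contra hempty
  refine (hS m).ne' (measure_mono_null (fun z hz => ?_) hnull)
  exact ⟨hm.trans_lt hz.2, fun hzU => hempty ⟨z, hz.1, hzU⟩⟩

theorem stmt_5 (A : Set ℝ) (hA₀ : A ⊆ Ioi 0) (hA : MeasurableSet A)
    (hpos : 0 < volume A) (hd : ∀ x ∈ A, IsDensityPoint A x)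
    (j : ℚ) (hj : 0 < j) :
    (∃ c : ℝ, volume (Ioi c \ ⋃ (q : ℚ) (_ : j ≤ q), (fun x => (q : ℝ) * x) '' A) = 0) ∧
    ∀ S : Set ℝ, S ⊆ Ioi 0 → MeasurableSet S →
      (∀ m : ℕ, 0 < volume (S ∩ Ioi (m : ℝ))) →
      (S ∩ ⋃ (q : ℚ) (_ : j ≤ q), (fun x => (q : ℝ) * x) '' A).Nonempty :=
  stmt_5_general A hA₀ hA hpos hd j
end

section
/- Let Ba denote the σ-algebra of subsets of ℝ with the Baire property, and let F : Ba → Ba be monotonic, i.e. F(S) ⊆ F(T) whenever S ⊆ T. Suppose that S ∩ F(S) ≠ ∅ for every non-meagre S ∈ Ba. Then for every non-meagre T ∈ Ba, the set T \ F(T) is meagre (i.e. T ∩ F(T) is quasi all of T). -/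
open Filter Set Topology

theorem stmt_6 (F : Set ℝ → Set ℝ)
    (hF : ∀ S, BaireMeasurableSet S → BaireMeasurableSet (F S))
    (hmono : ∀ S T : Set ℝ, S ⊆ T → F S ⊆ F T)
    (hexist : ∀ S : Set ℝ, BaireMeasurableSet S → ¬ IsMeagre S → (S ∩ F S).Nonempty) :
    ∀ T : Set ℝ, BaireMeasurableSet T → ¬ IsMeagre T → IsMeagre (T \ F T) := by
  intro T hT _
  by_contra hm
  have hS : BaireMeasurableSet (T \ F T) :=
    MeasurableSet.diff hT (hF T hT)
  obtain ⟨x, hx1, hx2⟩ := hexist _ hS hm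
  exact hx1.2 (hmono _ T diff_subset hx2)
end

section
/- Let Ba denote the σ-algebra of subsets of ℝ with the Baire property and let F : Ba → Ba be monotonic. If W ∩ F(W) ≠ ∅ for every non-meagre G_δ set W ⊆ ℝ, then for every non-meagre T ∈ Ba the set T \ F(T) is meagre. -/
open Filter Set Topology

theorem stmt_7 (F : Set ℝ → Set ℝ)
    (hF : ∀ S, BaireMeasurableSet S → BaireMeasurableSet (F S))
    (hmono : ∀ S T : Set ℝ, S ⊆ T → F S ⊆ F T)
    (hexist : ∀ W : Set ℝ, IsGδ W → ¬ IsMeagre W → (W ∩ F W).Nonempty) :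
    ∀ T : Set ℝ, BaireMeasurableSet T → ¬ IsMeagre T → IsMeagre (T \ F T) := by
  intro T hT hTnm
  by_contra hS
  set S : Set ℝ := T \ F T with hSdef
  have hSbm : BaireMeasurableSet S := hT.diff (hF T hT)
  obtain ⟨U, hUo, hSU⟩ := hSbm.residualEq_isOpen
  -- the set where S and U agree is residual
  have hres : {x | x ∈ S ↔ x ∈ U} ∈ residual ℝ := by
    filter_upwards [hSU] with x hx
    simp only [eq_iff_iff] at hx
    exact hx
  obtain ⟨t, hts, htGδ, htd⟩ := mem_residual.1 hres
  have htres : t ∈ residual ℝ := residual_of_dense_Gδ htGδ htd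
  set W : Set ℝ := U ∩ t with hWdef
  have hWGδ : IsGδ W := hUo.isGδ.inter htGδ
  have hWS : W ⊆ S := fun x ⟨hxU, hxt⟩ => (hts hxt).2 hxU
  have hWnm : ¬ IsMeagre W := by
    intro hWm
    apply hS
    have hsub : S ⊆ W ∪ tᶜ := by
      intro x hx
      by_cases hxt : x ∈ t
      · exact Or.inl ⟨(hts hxt).1 hx, hxt⟩
      · exact Or.inr hxt
    have : IsMeagre (W ∪ tᶜ) := by
      rw [IsMeagre, compl_union, compl_compl]
      exact inter_mem hWm htres
    exact this.mono hsub
  obtain ⟨x, hxW, hxFW⟩ := hexist W hWGδ hWnm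
  exact (hWS hxW).2 (hmono W T (fun y hy => (hWS hy).1) hxFW)
end

section
/- Let X be a Baire topological space, {h_i : i ∈ I} a countable linearly ordered family of self-homeomorphisms of X that is weakly Archimedean, and {S_k : k ∈ ℕ} a countable family of essentially unbounded Baire subsets of X. Then for quasi all η ∈ X (all η off a meagre set) and every k ∈ ℕ there exists a cofinal subset J ⊆ I such that h_j(η) ∈ S_k for all j ∈ J. -/
/-!
Fix `j`. The set `T` of points whose orbit meets `S` at some time `i ≥ j` is Baire measurable.
If it were not comeagre, some nonempty open `U` would have `T ∩ U` meagre; then so is the union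
`M` of its images under the countably many `h i` with `i ≥ j`. Removing `M` from `S` keeps it
essentially unbounded, so the weak Archimedean property produces `h i v ∈ S \ M` with `v ∈ U`.
But then `v ∈ T ∩ U`, so `h i v ∈ M`. Intersecting over the countably many `j` and `k` gives
the theorem.
-/

open Filter Set Topology

section

variable {X : Type*} [TopologicalSpace X]

theorem BaireMeasurableSet.exists_isOpen_nonempty_isMeagre_inter {s : Set X}
    (hs : BaireMeasurableSet s) (hres : s ∉ residual X) :
    ∃ U : Set X, IsOpen U ∧ U.Nonempty ∧ IsMeagre (s ∩ U) := by
  obtain ⟨U, hUo, hU⟩ := hs.compl.residualEq_isOpen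
  have hsU : IsMeagre (s ∩ U) :=
    mem_of_superset (eventuallyEq_set.mp hU) fun x hx ⟨hxs, hxU⟩ => hx.mpr hxU hxs
  refine ⟨U, hUo, nonempty_iff_ne_empty.mpr ?_, hsU⟩
  rintro rfl
  exact hres (mem_of_superset (eventuallyEq_set.mp hU) fun _ hx => not_not.mp hx.mp)

theorem IsMeagre.image_homeomorph {s : Set X} (hs : IsMeagre s) (f : X ≃ₜ X) :
    IsMeagre (f '' s) := by
  rw [f.image_eq_preimage_symm]
  exact hs.preimage_of_isOpenMap f.symm.continuous f.symm.isOpenMap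

def EssentiallyUnbounded {ι : Type*} (E : ι → Set X) (S : Set X) : Prop :=
  ∀ m, ¬ IsMeagre (S \ E m)

theorem EssentiallyUnbounded.diff_isMeagre {ι : Type*} {E : ι → Set X} {S M : Set X}
    (hS : EssentiallyUnbounded E S) (hM : IsMeagre M) : EssentiallyUnbounded E (S \ M) := by
  intro m hm
  refine hS m ((hm.union hM).mono fun x ⟨hxS, hxE⟩ => ?_)
  by_cases hxM : x ∈ M
  · exact Or.inr hxM
  · exact Or.inl ⟨⟨hxS, hxM⟩, hxE⟩

def IsWeaklyArchimedean {I ι : Type*} [Preorder I] (h : I → X ≃ₜ X) (E : ι → Set X) : Prop :=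
  ∀ V : Set X, IsOpen V → V.Nonempty → ∀ j : I,
    ∀ S : Set X, BaireMeasurableSet S → EssentiallyUnbounded E S →
      ((⋃ (i : I) (_ : j ≤ i), h i '' V) ∩ S).Nonempty

namespace IsWeaklyArchimedean

variable {I ι : Type*} [Preorder I] [Countable I] {h : I → X ≃ₜ X} {E : ι → Set X} {S : Set X}

theorem eventually_exists_ge_mem (hWA : IsWeaklyArchimedean h E) (hS : BaireMeasurableSet S)
    (hUnb : EssentiallyUnbounded E S) (j : I) :
    ∀ᶠ x in residual X, ∃ i, j ≤ i ∧ h i x ∈ S := by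
  set T : Set X := ⋃ (i : I) (_ : j ≤ i), h i ⁻¹' S
  have hT : BaireMeasurableSet T := .iUnion fun i => .iUnion fun _ =>
    hS.preimage (h i).continuous (h i).isOpenMap
  suffices T ∈ residual X from mem_of_superset this fun x hx => by simpa [T] using hx
  by_contra hres
  obtain ⟨U, hUo, hUne, hTU⟩ := hT.exists_isOpen_nonempty_isMeagre_inter hres
  set M : Set X := ⋃ (i : I) (_ : j ≤ i), h i '' (T ∩ U)
  have hM : IsMeagre M :=
    isMeagre_iUnion fun i => isMeagre_iUnion fun _ => hTU.image_homeomorph _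
  obtain ⟨x, hxU, hxS, hxM⟩ :=
    hWA U hUo hUne j (S \ M) (hS.diff hM.baireMeasurableSet) (hUnb.diff_isMeagre hM)
  obtain ⟨i, hji, v, hvU, rfl⟩ := mem_iUnion₂.mp hxU
  have hvT : v ∈ T := mem_iUnion₂.mpr ⟨i, hji, hxS⟩
  exact hxM (mem_iUnion₂.mpr ⟨i, hji, v, ⟨hvT, hvU⟩, rfl⟩)

theorem eventually_forall_exists_ge_mem (hWA : IsWeaklyArchimedean h E)
    (hS : BaireMeasurableSet S) (hUnb : EssentiallyUnbounded E S) :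
    ∀ᶠ x in residual X, ∀ j, ∃ i, j ≤ i ∧ h i x ∈ S :=
  eventually_countable_forall.mpr (hWA.eventually_exists_ge_mem hS hUnb)

end IsWeaklyArchimedean

end

theorem stmt_9_general {X : Type*} [TopologicalSpace X]
    {I : Type*} [LinearOrder I] [Countable I]
    (h : I → X ≃ₜ X)
    (E : ℕ → Set X)
    -- weak Archimedean property of the family `h`:
    (hWA : ∀ V : Set X, IsOpen V → V.Nonempty → ∀ j : I,
      ∀ S : Set X, BaireMeasurableSet S → (∀ m : ℕ, ¬ IsMeagre (S \ E m)) →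
        ((⋃ (i : I) (_ : j ≤ i), h i '' V) ∩ S).Nonempty)
    (S : ℕ → Set X) (hS : ∀ k, BaireMeasurableSet (S k))
    (hUnb : ∀ k, ∀ m : ℕ, ¬ IsMeagre (S k \ E m)) :
    ∃ N : Set X, IsMeagre N ∧ ∀ η : X, η ∉ N → ∀ k : ℕ,
      ∃ J : Set I, (∀ j : I, ∃ i ∈ J, j ≤ i) ∧ ∀ i ∈ J, h i η ∈ S k := by
  have hgood : ∀ᶠ η in residual X, ∀ k j, ∃ i, j ≤ i ∧ h i η ∈ S k :=
    eventually_countable_forall.mpr fun k =>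
      IsWeaklyArchimedean.eventually_forall_exists_ge_mem hWA (hS k) (hUnb k)
  refine ⟨{η | ∀ k j, ∃ i, j ≤ i ∧ h i η ∈ S k}ᶜ,
    by rw [IsMeagre, compl_compl]; exact hgood, ?_⟩
  intro η hη k
  rw [notMem_compl_iff] at hη
  exact ⟨{i | h i η ∈ S k}, fun j => (hη k j).imp fun _ ⟨hji, hi⟩ => ⟨hi, hji⟩, fun _ hi => hi⟩

/-- Bitopological Kingman theorem.  Essential unboundedness is taken relative to a
fixed exhaustion `E : ℕ → Set X`; a set `S` is essentially unbounded if `S \ E m`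
is non-meagre for every `m`. -/
theorem stmt_9 {X : Type*} [TopologicalSpace X] [BaireSpace X]
    {I : Type*} [LinearOrder I] [Countable I]
    (hcof : ∀ i : I, ∃ j : I, i < j)
    (h : I → X ≃ₜ X)
    (E : ℕ → Set X)
    -- weak Archimedean property of the family `h`:
    (hWA : ∀ V : Set X, IsOpen V → V.Nonempty → ∀ j : I,
      ∀ S : Set X, BaireMeasurableSet S → (∀ m : ℕ, ¬ IsMeagre (S \ E m)) →
        ((⋃ (i : I) (_ : j ≤ i), h i '' V) ∩ S).Nonempty)
    (S : ℕ → Set X) (hS : ∀ k, BaireMeasurableSet (S k))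
    (hUnb : ∀ k, ∀ m : ℕ, ¬ IsMeagre (S k \ E m)) :
    ∃ N : Set X, IsMeagre N ∧ ∀ η : X, η ∉ N → ∀ k : ℕ,
      ∃ J : Set I, (∀ j : I, ∃ i ∈ J, j ≤ i) ∧ ∀ i ∈ J, h i η ∈ S k :=
  stmt_9_general h E hWA S hS hUnb
end

section
/- Let {S_k : k ∈ ℕ} be Lebesgue-measurable subsets of (0,∞), each essentially unbounded in the measure sense (S_k ∩ (m,∞) of positive measure for all m). Then for almost every η > 0 and each k there exists an unbounded set J ⊆ ℚ ∩ (0,∞) with qη ∈ S_k for all q ∈ J. -/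
/-! If `A ⊆ (0, ∞)` has positive measure, the set `B` of `x > 0` with `q x ∉ A` for every
positive rational `q` is null. Otherwise take Lebesgue density points `a ∈ A`, `b ∈ B` and
rationals `q` with `a / q` just above `b`: on small balls around `a / q` containing `b`, both
`B` and `q⁻¹ A` have density tending to one (the density theorem allows moving centres),
although they are disjoint. Applying this to `A = S k ∩ (m, ∞)` for all `k, m` gives rational
multipliers that are unbounded. -/

open MeasureTheory Filter Set Topology Metric

lemma exists_mem_forall_tendsto_measure_inter_closedBall_div {S : Set ℝ} (hS : MeasurableSet S)
    (hS₀ : volume S ≠ 0) :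
    ∃ x ∈ S, ∀ w δ : ℕ → ℝ, Tendsto δ atTop (𝓝[>] 0) → (∀ n, x ∈ closedBall (w n) (δ n)) →
      Tendsto (fun n ↦ volume (S ∩ closedBall (w n) (δ n)) / volume (closedBall (w n) (δ n)))
        atTop (𝓝 1) := by
  have : (ae (volume.restrict S)).NeBot := ae_neBot.2 (by rwa [Ne, Measure.restrict_eq_zero])
  obtain ⟨x, hxS, hx⟩ := ((ae_restrict_mem hS).and
    (IsUnifLocDoublingMeasure.ae_tendsto_measure_inter_div volume S 1)).exists
  exact ⟨x, hxS, fun w δ hδ hxw ↦ hx w δ hδ (.of_forall fun n ↦ by simpa using hxw n)⟩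

lemma Real.preimage_mul_left_closedBall {c : ℝ} (hc : 0 < c) (x r : ℝ) :
    (c * ·) ⁻¹' closedBall (c * x) (c * r) = closedBall x r := by
  ext y
  simp only [mem_preimage, mem_closedBall, Real.dist_eq, ← mul_sub, abs_mul, abs_of_pos hc,
    mul_le_mul_iff_right₀ hc]

lemma measure_preimage_mul_inter_closedBall_div {c : ℝ} (hc : 0 < c) (s : Set ℝ) (x r : ℝ) :
    volume ((c * ·) ⁻¹' s ∩ closedBall x r) / volume (closedBall x r) =
      volume (s ∩ closedBall (c * x) (c * r)) / volume (closedBall (c * x) (c * r)) := by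
  rw [← Real.preimage_mul_left_closedBall hc x r, ← preimage_inter,
    Real.volume_preimage_mul_left hc.ne', Real.volume_preimage_mul_left hc.ne',
    ENNReal.mul_div_mul_left _ _ (by simpa using hc.ne') ENNReal.ofReal_ne_top]

lemma measure_inter_div_add_measure_inter_div_le_one {α : Type*} [MeasurableSpace α]
    {μ : Measure α} {s t : Set α} (hst : Disjoint s t) (ht : MeasurableSet t) (u : Set α) :
    μ (s ∩ u) / μ u + μ (t ∩ u) / μ u ≤ 1 := by
  rw [ENNReal.div_add_div_same]
  refine ENNReal.div_le_of_le_mul ?_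
  calc μ (s ∩ u) + μ (t ∩ u) ≤ μ (u \ t) + μ (u ∩ t) := by
        rw [inter_comm t u]
        gcongr
        exact fun x hx ↦ ⟨hx.2, hst.notMem_of_mem_left hx.1⟩
    _ = 1 * μ u := by rw [one_mul, add_comm, measure_inter_add_sdiff u ht]

lemma exists_rat_seq_div_mem_closedBall {a b : ℝ} (ha : 0 < a) (hb : 0 < b) {δ : ℕ → ℝ}
    (hδ₀ : ∀ n, 0 < δ n) (hδ : Tendsto δ atTop (𝓝 0)) :
    ∃ q : ℕ → ℚ, (∀ n, (0 : ℝ) < q n) ∧ (∀ n, b ∈ closedBall (a / q n) (δ n)) ∧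
      Tendsto (fun n ↦ (q n : ℝ) * δ n) atTop (𝓝[>] 0) := by
  choose q hq_lo hq_hi using fun n ↦
    exists_rat_btwn (div_lt_div_of_pos_left ha hb (lt_add_of_pos_right b (hδ₀ n)))
  have hq₀ : ∀ n, (0 : ℝ) < q n := fun n ↦ (div_pos ha (by linarith [hδ₀ n])).trans (hq_lo n)
  refine ⟨q, hq₀, fun n ↦ ?_, ?_⟩
  · have hlo : b < a / q n :=
      (lt_div_iff₀ (hq₀ n)).2 (by rw [mul_comm]; exact (lt_div_iff₀ hb).1 (hq_hi n))
    have hhi : a / q n < b + δ n := (div_lt_iff₀ (hq₀ n)).2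
      (by rw [mul_comm]; exact (div_lt_iff₀ (by linarith [hδ₀ n])).1 (hq_lo n))
    rw [mem_closedBall, Real.dist_eq, abs_le]
    constructor <;> linarith
  · refine tendsto_nhdsWithin_iff.2 ⟨?_, .of_forall fun n ↦ mul_pos (hq₀ n) (hδ₀ n)⟩
    refine squeeze_zero (fun n ↦ (mul_pos (hq₀ n) (hδ₀ n)).le)
      (fun n ↦ mul_le_mul_of_nonneg_right (hq_hi n).le (hδ₀ n).le) ?_
    simpa using hδ.const_mul (a / b)

theorem exists_rat_mul_mem_of_measure_ne_zero {A B : Set ℝ} (hA : MeasurableSet A)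
    (hB : MeasurableSet B) (hA₀ : A ⊆ Ioi 0) (hB₀ : B ⊆ Ioi 0) (hAμ : volume A ≠ 0)
    (hBμ : volume B ≠ 0) :
    ∃ q : ℚ, 0 < q ∧ ∃ x ∈ B, (q : ℝ) * x ∈ A := by
  by_contra! hAB
  obtain ⟨a, ha, hA_dens⟩ := exists_mem_forall_tendsto_measure_inter_closedBall_div hA hAμ
  obtain ⟨b, hb, hB_dens⟩ := exists_mem_forall_tendsto_measure_inter_closedBall_div hB hBμ
  set δ : ℕ → ℝ := fun n ↦ 1 / (n + 1)
  have hδ₀ : ∀ n, 0 < δ n := fun n ↦ by positivity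
  obtain ⟨q, hq₀, hb_mem, hqδ⟩ := exists_rat_seq_div_mem_closedBall (hA₀ ha) (hB₀ hb) hδ₀
    tendsto_one_div_add_atTop_nhds_zero_nat
  have hB_lim := hB_dens (fun n ↦ a / q n) δ
    (tendsto_nhdsWithin_iff.2 ⟨tendsto_one_div_add_atTop_nhds_zero_nat, .of_forall hδ₀⟩) hb_mem
  -- Rescaling by `q n` turns the ball about `a / q n` into a ball about `a`.
  have hA_lim : Tendsto (fun n ↦ volume (((q n : ℝ) * ·) ⁻¹' A ∩ closedBall (a / q n) (δ n)) /
      volume (closedBall (a / q n) (δ n))) atTop (𝓝 1) := by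
    simp_rw [measure_preimage_mul_inter_closedBall_div (hq₀ _), mul_div_cancel₀ _ (hq₀ _).ne']
    exact hA_dens (fun _ ↦ a) _ hqδ fun n ↦ mem_closedBall_self (mul_pos (hq₀ n) (hδ₀ n)).le
  have : (1 : ENNReal) + 1 ≤ 1 := le_of_tendsto' (hB_lim.add hA_lim) fun n ↦
    measure_inter_div_add_measure_inter_div_le_one
      (disjoint_left.2 fun x hx ↦ hAB (q n) (mod_cast hq₀ n) x hx)
      (hA.preimage (measurable_const_mul _)) _
  norm_num at this

theorem ae_exists_rat_mul_mem {A : Set ℝ} (hA : MeasurableSet A) (hA₀ : A ⊆ Ioi 0)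
    (hAμ : volume A ≠ 0) :
    ∀ᵐ x, 0 < x → ∃ q : ℚ, 0 < q ∧ (q : ℝ) * x ∈ A := by
  rw [ae_iff]
  simp only [Classical.not_imp, not_exists, not_and]
  by_contra hB
  have hBm : MeasurableSet {x : ℝ | 0 < x ∧ ∀ q : ℚ, 0 < q → (q : ℝ) * x ∉ A} := by
    measurability
  obtain ⟨q, hq, x, hx, hqx⟩ :=
    exists_rat_mul_mem_of_measure_ne_zero hA hBm hA₀ (fun x hx ↦ hx.1) hAμ hB
  exact hx.2 q hq hqx

theorem stmt_11 (S : ℕ → Set ℝ) (hS₀ : ∀ k, S k ⊆ Ioi 0)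
    (hS : ∀ k, MeasurableSet (S k))
    (hUnb : ∀ k, ∀ m : ℕ, 0 < volume (S k ∩ Ioi (m : ℝ))) :
    ∃ N : Set ℝ, volume N = 0 ∧ ∀ η : ℝ, 0 < η → η ∉ N → ∀ k : ℕ,
      ∃ J : Set ℚ, (∀ q ∈ J, 0 < q) ∧ (∀ r : ℚ, ∃ q ∈ J, r ≤ q) ∧
        ∀ q ∈ J, (q : ℝ) * η ∈ S k := by
  have hgood : ∀ᵐ η, ∀ k m : ℕ, 0 < η → ∃ q : ℚ, 0 < q ∧ (q : ℝ) * η ∈ S k ∩ Ioi (m : ℝ) := by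
    simp only [ae_all_iff]
    exact fun k m ↦ ae_exists_rat_mul_mem ((hS k).inter measurableSet_Ioi)
      (inter_subset_left.trans (hS₀ k)) (hUnb k m).ne'
  refine ⟨_, ae_iff.1 hgood, fun η hη hηN k ↦ ?_⟩
  refine ⟨{q | 0 < q ∧ (q : ℝ) * η ∈ S k}, fun q hq ↦ hq.1, fun r ↦ ?_, fun q hq ↦ hq.2⟩
  obtain ⟨q, hq, hqS, hqm⟩ := not_not.1 hηN k ⌈(r : ℝ) * η⌉₊ hη
  have hrq : (r : ℝ) * η < q * η := (Nat.le_ceil _).trans_lt hqm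
  exact ⟨q, ⟨hq, hqS⟩, by exact_mod_cast (lt_of_mul_lt_mul_right hrq hη.le).le⟩
end

section
/- Let f : (0,∞) → ℝ be Lebesgue-measurable and let V ⊆ (0,∞) be a nonempty open interval. Suppose that for each x ∈ V, f(qx) → 0 as q → ∞ through the positive rationals. Then f(t) → 0 as t → ∞ in the essential sense: for every c > 0 the set {t : |f(t)| > c} is not essentially unbounded, i.e. for some m the set {t > m : |f(t)| > c} has measure zero. -/
/-!
Suppose `E = {t | c < |f t|}` had positive measure beyond every bound. Pointwise convergence
along the rationals gives a set `A ⊆ (a, b)` of positive measure and an `n` with `|f (q x)| ≤ c`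
for all `x ∈ A` and rationals `q ≥ n`. Take Lebesgue density points `x₀` of `A` and `t > n b` of
`E`. For every `s` near `t / x₀` the dilate `s • A` and `E` each fill most of a small ball around
`s x₀`, so they meet; choosing such an `s = q` rational contradicts the choice of `A`.
-/

open MeasureTheory Filter Set Topology Metric
open scoped ENNReal Pointwise

theorem nonempty_inter_of_measure_diff_add_measure_diff_lt {α : Type*} [MeasurableSpace α]
    {μ : Measure α} {B X Y : Set α} (h : μ (B \ X) + μ (B \ Y) < μ B) : (X ∩ Y).Nonempty := by
  by_contra hXY
  have hB : B ⊆ (B \ X) ∪ (B \ Y) := fun y hy => by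
    by_cases hyX : y ∈ X
    · exact Or.inr ⟨hy, fun hyY => hXY ⟨y, hyX, hyY⟩⟩
    · exact Or.inl ⟨hy, hyX⟩
  exact (measure_mono hB |>.trans (measure_union_le _ _)).not_gt h

theorem exists_mem_tendsto_measure_closedBall_diff_div {β : Type*} [MetricSpace β]
    [MeasurableSpace β] [BorelSpace β] [SecondCountableTopology β] [HasBesicovitchCovering β]
    (μ : Measure β) [IsLocallyFiniteMeasure μ] {S : Set β} (hS : MeasurableSet S) (h : μ S ≠ 0) :
    ∃ x ∈ S, Tendsto (fun r => μ (closedBall x r \ S) / μ (closedBall x r)) (𝓝[>] 0) (𝓝 0) := by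
  have : (ae (μ.restrict S)).NeBot := ae_neBot.mpr (by simpa using h)
  obtain ⟨x, hxS, hx⟩ := ((ae_restrict_mem hS).and (ae_restrict_of_ae
    (Besicovitch.ae_tendsto_measure_inter_div_of_measurableSet μ hS.compl))).exists
  refine ⟨x, hxS, ?_⟩
  simpa [sdiff_eq_compl_inter, hxS] using hx

theorem eventually_volume_closedBall_diff_lt {x : ℝ} {S : Set ℝ}
    (h : Tendsto (fun r => volume (closedBall x r \ S) / volume (closedBall x r))
      (𝓝[>] 0) (𝓝 0)) :
    ∀ᶠ r in 𝓝[>] 0, volume (closedBall x r \ S) < ENNReal.ofReal (r / 2) := by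
  filter_upwards [h.eventually (gt_mem_nhds (show (0 : ℝ≥0∞) < 4⁻¹ by norm_num)),
    self_mem_nhdsWithin] with r hr (hr0 : 0 < r)
  rw [Real.volume_closedBall, ENNReal.div_lt_iff (Or.inl (by simpa using hr0))
    (Or.inl ENNReal.ofReal_ne_top)] at hr
  convert hr using 1
  rw [show r / 2 = 2 * r / 4 by ring, ENNReal.ofReal_div_of_pos four_pos, ENNReal.ofReal_ofNat,
    ENNReal.div_eq_inv_mul]

theorem eventually_smul_inter_nonempty {A E : Set ℝ} {x₀ t : ℝ} (hx₀ : 0 < x₀) (ht : 0 < t)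
    (hA : Tendsto (fun r => volume (closedBall x₀ r \ A) / volume (closedBall x₀ r))
      (𝓝[>] 0) (𝓝 0))
    (hE : Tendsto (fun r => volume (closedBall t r \ E) / volume (closedBall t r))
      (𝓝[>] 0) (𝓝 0)) :
    ∀ᶠ s in 𝓝 (t / x₀), (s • A ∩ E).Nonempty := by
  set s₀ := t / x₀
  have hs₀ : 0 < s₀ := div_pos ht hx₀
  -- `closedBall t (2 * s₀ * r)` contains `closedBall (s * x₀) (s * r)` for `s` near `s₀`,
  -- and is less than three times as long.
  obtain ⟨r, hr, hAr, hEr⟩ : ∃ r : ℝ, 0 < r ∧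
      volume (closedBall x₀ r \ A) < ENNReal.ofReal (r / 2) ∧
      volume (closedBall t (2 * s₀ * r) \ E) < ENNReal.ofReal (2 * s₀ * r / 2) :=
    (eventually_mem_nhdsWithin.and ((eventually_volume_closedBall_diff_lt hA).and
      (eventually_nhdsGT_zero_mul_left (by positivity)
        (eventually_volume_closedBall_diff_lt hE)))).exists
  have hball : ∀ᶠ s in 𝓝 s₀, |s * x₀ - t| + s * r < 2 * s₀ * r := by
    refine ContinuousAt.eventually_lt (by fun_prop) (by fun_prop) ?_
    rw [div_mul_cancel₀ t hx₀.ne', sub_self, abs_zero]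
    nlinarith
  filter_upwards [hball, eventually_gt_nhds (show 2 / 3 * s₀ < s₀ by linarith)] with s hsub hs
  have hs0 : 0 < s := by linarith
  refine nonempty_inter_of_measure_diff_add_measure_diff_lt
    (B := closedBall (s * x₀) (s * r)) (μ := volume) ?_
  have hAs : volume (closedBall (s * x₀) (s * r) \ s • A) < ENNReal.ofReal (s * r / 2) := by
    have hscale : closedBall (s * x₀) (s * r) \ s • A = s • (closedBall x₀ r \ A) := by
      rw [smul_set_sdiff₀ hs0.ne', smul_closedBall _ _ hr.le, Real.norm_of_nonneg hs0.le,
        smul_eq_mul]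
    rw [hscale, Measure.addHaar_smul_of_nonneg _ hs0.le, Module.finrank_self, pow_one,
      mul_div_assoc, ENNReal.ofReal_mul hs0.le]
    exact ENNReal.mul_lt_mul_right (by simpa using hs0) ENNReal.ofReal_ne_top hAr
  have hEs : volume (closedBall (s * x₀) (s * r) \ E) < ENNReal.ofReal (s₀ * r) := by
    refine (measure_mono (sdiff_subset_sdiff_left (closedBall_subset_closedBall' ?_))).trans_lt
      (hEr.trans_eq (by ring_nf))
    rw [Real.dist_eq]
    linarith
  calc _ < ENNReal.ofReal (s * r / 2) + ENNReal.ofReal (s₀ * r) := ENNReal.add_lt_add hAs hEs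
    _ = ENNReal.ofReal (s * r / 2 + s₀ * r) :=
      (ENNReal.ofReal_add (by positivity) (by positivity)).symm
    _ ≤ ENNReal.ofReal (2 * (s * r)) := ENNReal.ofReal_le_ofReal (by nlinarith)
    _ = _ := (Real.volume_closedBall _ _).symm

theorem exists_measure_ne_zero_forall_rat_ge_abs_le {μ : Measure ℝ} {f : ℝ → ℝ}
    (hf : Measurable f) {V : Set ℝ} (hV : MeasurableSet V) (hV0 : μ V ≠ 0)
    (hlim : ∀ x ∈ V, Tendsto (fun q : ℚ => f (q * x)) atTop (𝓝 0)) {c : ℝ} (hc : 0 < c) :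
    ∃ n : ℕ, ∃ A ⊆ V, MeasurableSet A ∧ μ A ≠ 0 ∧
      ∀ x ∈ A, ∀ q : ℚ, (n : ℚ) ≤ q → |f (q * x)| ≤ c := by
  set A : ℕ → Set ℝ := fun n => V ∩ ⋂ (q : ℚ) (_ : (n : ℚ) ≤ q), {x | |f (q * x)| ≤ c}
  have hcover : V ⊆ ⋃ n, A n := by
    intro x hx
    obtain ⟨q₀, hq₀⟩ := eventually_atTop.mp
      ((hlim x hx).eventually (closedBall_mem_nhds (0 : ℝ) hc))
    obtain ⟨n, hn⟩ := exists_nat_ge q₀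
    exact mem_iUnion.mpr ⟨n, hx, mem_iInter₂.mpr fun q hq => by simpa using hq₀ q (hn.trans hq)⟩
  obtain ⟨n, hn⟩ : ∃ n, μ (A n) ≠ 0 := by
    by_contra! h
    exact hV0 (measure_mono_null hcover (measure_iUnion_null h))
  refine ⟨n, A n, inter_subset_left,
    hV.inter (.iInter fun q => .iInter fun _ => measurableSet_le (by fun_prop) measurable_const),
    hn, fun x hx q hq => mem_iInter₂.mp hx.2 q hq⟩

theorem stmt_12 (f : ℝ → ℝ) (hf : Measurable f)
    (a b : ℝ) (ha : 0 < a) (hab : a < b)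
    (hlim : ∀ x ∈ Ioo a b, Tendsto (fun q : ℚ => f ((q : ℝ) * x)) atTop (𝓝 0)) :
    ∀ c : ℝ, 0 < c → ∃ m : ℕ, volume {t : ℝ | (m : ℝ) < t ∧ c < |f t|} = 0 := by
  intro c hc
  obtain ⟨n, A, hAV, hAm, hA0, hAc⟩ :=
    exists_measure_ne_zero_forall_rat_ge_abs_le (μ := volume) hf measurableSet_Ioo
      (by simpa using hab) hlim hc
  obtain ⟨x₀, hx₀A, hx₀⟩ := exists_mem_tendsto_measure_closedBall_diff_div volume hAm hA0
  refine ⟨⌈n * b⌉₊, ?_⟩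
  by_contra hE0
  obtain ⟨t, ht, htE⟩ := exists_mem_tendsto_measure_closedBall_diff_div volume
    ((measurableSet_lt measurable_const measurable_id).inter
      (measurableSet_lt measurable_const hf.abs)) hE0
  obtain ⟨q, _, ⟨x, hxA, rfl⟩, hqxE⟩ := Rat.denseRange_cast.mem_nhds
    (eventually_smul_inter_nonempty (ha.trans (hAV hx₀A).1)
      ((Nat.cast_nonneg _).trans_lt ht.1) hx₀ htE)
  have hx := hAV hxA
  have hnxqx : (n : ℝ) * x < q * x := calc
    (n : ℝ) * x ≤ n * b := by gcongr; exact hx.2.le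
    _ ≤ ⌈n * b⌉₊ := Nat.le_ceil _
    _ < q * x := hqxE.1
  have hnq : (n : ℚ) ≤ q := by
    exact_mod_cast (lt_of_mul_lt_mul_right hnxqx (ha.trans hx.1).le).le
  exact (hAc x hxA q hnq).not_gt hqxE.2
end

section
/- Let f : (0,∞) → ℝ be Lebesgue-measurable and suppose f(qx) = f(x) for every positive rational q and almost every x > 0. Then f is constant almost everywhere on (0,∞). -/
/-!
Substituting `x = exp t` turns the hypothesis into invariance of `g = f ∘ exp` under translation
by the dense set `log ℚ₊`. Let `s` be a measurable set a.e. invariant under a dense set of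
translations and `A` a set of finite measure disjoint from `s`. The function `t ↦ μ (s ∩ (A - t))`
vanishes on a dense set, and its zero set is closed because translation is continuous in measure,
so it vanishes everywhere; Fubini then forces `μ s = 0` or `μ A = 0`. Hence every level set of `g`
is null or conull, and `g` is a.e. constant.
-/

open MeasureTheory Filter Set Topology
open scoped ENNReal symmDiff

section AddGroup

variable {G : Type*} [AddGroup G] [MeasurableSpace G] {μ : Measure G} [μ.IsAddLeftInvariant]

theorem measure_eq_zero_or_of_forall_measure_inter_preimage_add_left_eq_zero
    [MeasurableAdd₂ G] [MeasurableNeg G] [SFinite μ] {s A : Set G} (hs : MeasurableSet s)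
    (hA : MeasurableSet A) (h : ∀ t, μ (s ∩ (t + ·) ⁻¹' A) = 0) : μ s = 0 ∨ μ A = 0 := by
  refine or_iff_not_imp_left.2 fun hμs => ?_
  have hmeas : MeasurableSet {p : G × G | p.1 ∈ s → p.2 + p.1 ∉ A} :=
    (hs.preimage measurable_fst).himp (hA.preimage (measurable_snd.add measurable_fst)).compl
  have hae : ∀ᵐ x ∂μ, ∀ᵐ t ∂μ, x ∈ s → t + x ∉ A := by
    refine (Measure.ae_ae_comm hmeas).2 (ae_of_all _ fun t => ?_)
    filter_upwards [measure_eq_zero_iff_ae_notMem.1 (h t)] with x hx hxs hxA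
    exact hx ⟨hxs, hxA⟩
  obtain ⟨x, hxt, hxs⟩ := (hae.and_frequently (frequently_ae_mem_iff.2 hμs)).exists
  exact (measure_add_right_null μ x).1 <|
    measure_eq_zero_iff_ae_notMem.2 (hxt.mono fun t ht => ht hxs)

variable [TopologicalSpace G] [IsTopologicalAddGroup G] [BorelSpace G]

theorem isClosed_setOf_measure_inter_preimage_add_left_eq_zero [μ.InnerRegularCompactLTTop]
    [IsLocallyFiniteMeasure μ] (s : Set G) {A : Set G} (hA : NullMeasurableSet A μ)
    (hμA : μ A ≠ ∞) : IsClosed {t : G | μ (s ∩ (t + ·) ⁻¹' A) = 0} := by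
  set Z := {t : G | μ (s ∩ (t + ·) ⁻¹' A) = 0}
  refine isClosed_of_closure_subset fun t₀ ht₀ => ?_
  have : (𝓝[Z] t₀).NeBot := mem_closure_iff_nhdsWithin_neBot.1 ht₀
  let translate : C(G, C(G, G)) := ContinuousMap.curry ⟨fun p : G × G => p.1 + p.2, by fun_prop⟩
  have hsymmDiff : Tendsto (fun t => μ (((t + ·) ⁻¹' A) ∆ ((t₀ + ·) ⁻¹' A))) (𝓝 t₀) (𝓝 0) :=
    tendsto_measure_symmDiff_preimage_nhds_zero (f := translate) (g := translate t₀)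
      (translate.continuous.tendsto t₀) (.of_forall fun t => measurePreserving_add_left μ t)
      (measurePreserving_add_left μ t₀) hA hμA
  refine le_antisymm (ge_of_tendsto (hsymmDiff.mono_left (nhdsWithin_le_nhds (s := Z))) ?_) bot_le
  filter_upwards [self_mem_nhdsWithin] with t (ht : μ (s ∩ (t + ·) ⁻¹' A) = 0)
  calc μ (s ∩ (t₀ + ·) ⁻¹' A)
      ≤ μ (s ∩ (t + ·) ⁻¹' A ∪ ((t + ·) ⁻¹' A) ∆ ((t₀ + ·) ⁻¹' A)) := measure_mono fun x hx => by
        by_cases h : t + x ∈ A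
        · exact Or.inl ⟨hx.1, h⟩
        · exact Or.inr (Or.inr ⟨hx.2, h⟩)
    _ ≤ μ (((t + ·) ⁻¹' A) ∆ ((t₀ + ·) ⁻¹' A)) := by
        simpa [ht] using measure_union_le (μ := μ) (s ∩ (t + ·) ⁻¹' A) _

theorem aeconst_of_dense_setOfPred_preimage_add_left_ae [MeasurableAdd₂ G] [MeasurableNeg G]
    [SigmaFinite μ] [μ.InnerRegularCompactLTTop] [IsLocallyFiniteMeasure μ] {s : Set G}
    (hs : MeasurableSet s) (hd : Dense {t : G | (t + ·) ⁻¹' s =ᵐ[μ] s}) :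
    EventuallyConst s (ae μ) := by
  refine eventuallyConst_set.2 (or_iff_not_imp_right.2 fun hs' => ?_)
  have hμs : μ s ≠ 0 := mt measure_eq_zero_iff_ae_notMem.1 hs'
  refine ae_of_forall_measure_lt_top_ae_restrict _ fun A hA hμA => ?_
  have hclosed := isClosed_setOf_measure_inter_preimage_add_left_eq_zero s
    (hA.diff hs).nullMeasurableSet ((measure_mono sdiff_subset).trans_lt hμA).ne
  have hnull : μ (A \ s) = 0 := by
    refine (measure_eq_zero_or_of_forall_measure_inter_preimage_add_left_eq_zero hs (hA.diff hs)
      fun t => hclosed.closure_subset_iff.2 (fun t ht => ?_) (hd t)).resolve_left hμs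
    exact measure_mono_null (fun x hx => (⟨hx.1, hx.2.2⟩ : x ∈ s \ (t + ·) ⁻¹' s))
      (ae_eq_set.1 ht).2
  rw [ae_restrict_iff' hA]
  filter_upwards [measure_eq_zero_iff_ae_notMem.1 hnull] with x hx hxA
  by_contra hxs
  exact hx ⟨hxA, hxs⟩

theorem exists_ae_eq_const_of_dense_setOfPred_comp_add_left [MeasurableAdd₂ G] [MeasurableNeg G]
    [SigmaFinite μ] [μ.InnerRegularCompactLTTop] [IsLocallyFiniteMeasure μ]
    {X : Type*} [MeasurableSpace X] [HasCountableSeparatingOn X MeasurableSet univ] [Nonempty X]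
    {g : G → X} (hg : Measurable g) (hd : Dense {t : G | (fun x => g (t + x)) =ᵐ[μ] g}) :
    ∃ c, g =ᵐ[μ] Function.const G c :=
  exists_eventuallyEq_const_of_forall_separating MeasurableSet fun U hU =>
    eventuallyConst_set.1 <| aeconst_of_dense_setOfPred_preimage_add_left_ae (hg hU) <|
      hd.mono fun t (ht : (fun x => g (t + x)) =ᵐ[μ] g) => ht.mono fun x (hx : g (t + x) = g x) =>
        congrArg (· ∈ U) hx

end AddGroup

namespace Real

theorem ae_restrict_Ioi_zero_iff_ae_exp {p : ℝ → Prop} :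
    (∀ᵐ x ∂volume.restrict (Ioi 0), p x) ↔ ∀ᵐ t, p (exp t) := by
  rw [ae_restrict_iff' measurableSet_Ioi, ae_iff, ae_iff]
  constructor
  · refine fun h => measure_mono_null (fun t ht => ?_)
      (addHaar_image_eq_zero_of_differentiableOn_of_addHaar_eq_zero _ (fun x hx =>
        (differentiableAt_log (Classical.not_imp.1 hx).1.ne').differentiableWithinAt) h)
    exact ⟨exp t, fun h' => ht (h' (exp_pos t)), log_exp t⟩
  · refine fun h => measure_mono_null (fun x hx => ?_)
      (addHaar_image_eq_zero_of_differentiableOn_of_addHaar_eq_zero _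
        differentiable_exp.differentiableOn h)
    obtain ⟨hx0, hpx⟩ := Classical.not_imp.1 hx
    exact ⟨log x, by simpa [exp_log hx0] using hpx, exp_log hx0⟩

end Real

theorem stmt_13 (f : ℝ → ℝ) (hf : Measurable f)
    (hinv : ∀ q : ℚ, 0 < q → ∀ᵐ x ∂(volume.restrict (Ioi (0 : ℝ))), f ((q : ℝ) * x) = f x) :
    ∃ c : ℝ, ∀ᵐ x ∂(volume.restrict (Ioi (0 : ℝ))), f x = c := by
  have hD : Dense (Real.exp ⁻¹' range ((↑) : ℚ → ℝ)) :=
    Rat.denseRange_cast.preimage Real.isOpenEmbedding_exp.isOpenMap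
  have hinv_exp : ∀ t ∈ Real.exp ⁻¹' range ((↑) : ℚ → ℝ),
      (fun x => (f ∘ Real.exp) (t + x)) =ᵐ[volume] f ∘ Real.exp := by
    rintro t ⟨q, hq⟩
    have hq0 : (0 : ℝ) < q := hq ▸ Real.exp_pos t
    refine (Real.ae_restrict_Ioi_zero_iff_ae_exp.1 (hinv q (mod_cast hq0))).mono fun x hx => ?_
    simp only [Function.comp_apply, Real.exp_add, ← hq, hx]
  obtain ⟨c, hc⟩ := exists_ae_eq_const_of_dense_setOfPred_comp_add_left
    (hf.comp Real.measurable_exp) (hD.mono hinv_exp)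
  exact ⟨c, Real.ae_restrict_Ioi_zero_iff_ae_exp.2 hc⟩
end

section
/- Let f : (0,∞) → ℝ have the Baire property and suppose f(qx) = f(x) for every positive rational q and quasi all x > 0 (all x off a meagre set). Then f is constant on the complement of a meagre set. -/
/-!
Every `f ⁻¹' U`, `U` open, is a Baire set invariant under `x ↦ q x` for quasi all `x > 0`.
Such a set `s` is either meagre or comeagre in `(0, ∞)`: if `s` differs from an open set `V`
by a meagre set and `V` meets `(0, ∞)`, then for quasi all `x > 0` some rational multiple
`q x` lands in `V` and, away from countably many dilates of the meagre error set, also in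
`s`, so `x ∈ s` by invariance. Along the filter of quasi all positive reals, `f` is therefore
"ultra" on open sets; since this filter is closed under countable intersections and `ℝ` is
second countable and Hausdorff, its image under `f` contains a singleton `{c}`.
-/

open Filter Set Topology

theorem eventually_residual_inf_principal_iff {X : Type*} [TopologicalSpace X] {A : Set X}
    {p : X → Prop} :
    (∀ᶠ x in residual X ⊓ 𝓟 A, p x) ↔ ∃ M : Set X, IsMeagre M ∧ ∀ x ∈ A \ M, p x := by
  rw [eventually_inf_principal]
  constructor
  · intro h
    refine ⟨{x | x ∈ A → p x}ᶜ, by rwa [IsMeagre, compl_compl], fun x hx => ?_⟩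
    exact not_not.mp hx.2 hx.1
  · rintro ⟨M, hM, h⟩
    exact mem_of_superset hM fun x hxM hxA => h x ⟨hxA, hxM⟩

theorem IsOpen.neBot_residual_inf_principal {X : Type*} [TopologicalSpace X] [BaireSpace X]
    {A : Set X} (hA : IsOpen A) (hne : A.Nonempty) : (residual X ⊓ 𝓟 A).NeBot :=
  inf_principal_neBot_iff.mpr fun _ hU =>
    inter_comm A _ ▸ (dense_of_mem_residual hU).inter_open_nonempty A hA hne

theorem Filter.exists_singleton_mem_of_isOpen_or_compl_mem {Y : Type*} [TopologicalSpace Y]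
    [SecondCountableTopology Y] [T2Space Y] {G : Filter Y} [G.NeBot] [CountableInterFilter G]
    (h : ∀ U, IsOpen U → U ∈ G ∨ Uᶜ ∈ G) : ∃ c, {c} ∈ G := by
  have hB := TopologicalSpace.isBasis_countableBasis Y
  set K := ⋂ b ∈ {b ∈ TopologicalSpace.countableBasis Y | bᶜ ∈ G}, bᶜ
  have hK : K ∈ G := (countable_bInter_mem
    ((TopologicalSpace.countable_countableBasis Y).mono (sep_subset _ _))).mpr fun b hb => hb.2
  have basic_mem : ∀ b ∈ TopologicalSpace.countableBasis Y, ∀ e ∈ K, e ∈ b → b ∈ G :=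
    fun b hb e he heb => (h b (hB.isOpen hb)).resolve_right fun hbc =>
      mem_iInter₂.mp he b ⟨hb, hbc⟩ heb
  obtain ⟨c, hc⟩ := nonempty_of_mem hK
  refine ⟨c, mem_of_superset hK fun d hd => ?_⟩
  by_contra hdc
  obtain ⟨u, v, hu, hv, hcu, hdv, huv⟩ := t2_separation (Ne.symm hdc)
  obtain ⟨b, hb, hcb, hbu⟩ := hB.exists_subset_of_mem_open hcu hu
  obtain ⟨b', hb', hdb', hb'v⟩ := hB.exists_subset_of_mem_open hdv hv
  have hbb' := inter_mem (basic_mem b hb c hc hcb) (basic_mem b' hb' d hd hdb')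
  exact (nonempty_of_mem hbb').ne_empty (huv.mono hbu hb'v).inter_eq

theorem exists_rat_mul_mem {W : Set ℝ} (hW : IsOpen W) (hne : W.Nonempty) {x : ℝ} (hx : x ≠ 0) :
    ∃ q : ℚ, (q : ℝ) * x ∈ W := by
  obtain ⟨w, hw⟩ := hne
  exact Rat.denseRange_cast.exists_mem_open (hW.preimage (continuous_mul_const x))
    ⟨w / x, by simpa [div_mul_cancel₀ w hx] using hw⟩

theorem BaireMeasurableSet.mem_or_compl_mem_of_forall_rat_mul_mem_iff {s : Set ℝ}
    (hs : BaireMeasurableSet s)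
    (hinv : ∀ᶠ x in residual ℝ ⊓ 𝓟 (Ioi 0), ∀ q : ℚ, 0 < q → ((q : ℝ) * x ∈ s ↔ x ∈ s)) :
    s ∈ residual ℝ ⊓ 𝓟 (Ioi 0) ∨ sᶜ ∈ residual ℝ ⊓ 𝓟 (Ioi 0) := by
  obtain ⟨V, hVo, hsV⟩ := hs.residualEq_isOpen
  have hsV' := eventuallyEq_set.mp hsV
  rcases (V ∩ Ioi 0).eq_empty_or_nonempty with hV | hV
  · right
    rw [mem_inf_principal]
    filter_upwards [hsV'] with x hx hpos hxs
    exact (eq_empty_iff_forall_notMem.mp hV x) ⟨hx.mp hxs, hpos⟩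
  · left
    have hmul : ∀ᶠ x in residual ℝ, ∀ q : ℚ, q ≠ 0 → ((q : ℝ) * x ∈ s ↔ (q : ℝ) * x ∈ V) := by
      refine eventually_countable_forall.mpr fun q => ?_
      by_cases hq : q = 0
      · exact Eventually.of_forall fun _ hq' => absurd hq hq'
      · have hq' : (q : ℝ) ≠ 0 := Rat.cast_ne_zero.mpr hq
        let φ := Homeomorph.mulLeft₀ (q : ℝ) hq'
        exact ((tendsto_residual_of_isOpenMap φ.continuous φ.isOpenMap).eventually hsV').mono
          fun x hx _ => hx
    rw [eventually_inf_principal] at hinv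
    rw [mem_inf_principal]
    filter_upwards [hinv, hmul] with x hinvx hmulx hx
    obtain ⟨q, hqV, hqpos⟩ := exists_rat_mul_mem (hVo.inter isOpen_Ioi) hV (ne_of_gt hx)
    have hq : 0 < q := Rat.cast_pos.mp ((pos_iff_pos_of_mul_pos hqpos).mpr (mem_Ioi.mp hx))
    exact (hinvx hx q hq).mp ((hmulx q hq.ne').mpr hqV)

theorem stmt_14 (f : ℝ → ℝ)
    (hf : ∀ U : Set ℝ, IsOpen U → BaireMeasurableSet (f ⁻¹' U))
    (hinv : ∃ M : Set ℝ, IsMeagre M ∧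
      ∀ x ∈ Ioi (0 : ℝ) \ M, ∀ q : ℚ, 0 < q → f ((q : ℝ) * x) = f x) :
    ∃ (c : ℝ) (M : Set ℝ), IsMeagre M ∧ ∀ x ∈ Ioi (0 : ℝ) \ M, f x = c := by
  have : (residual ℝ ⊓ 𝓟 (Ioi 0)).NeBot := isOpen_Ioi.neBot_residual_inf_principal nonempty_Ioi
  have hfinv := eventually_residual_inf_principal_iff.mpr hinv
  have hdich (U : Set ℝ) (hU : IsOpen U) :
      U ∈ map f (residual ℝ ⊓ 𝓟 (Ioi 0)) ∨ Uᶜ ∈ map f (residual ℝ ⊓ 𝓟 (Ioi 0)) :=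
    (hf U hU).mem_or_compl_mem_of_forall_rat_mul_mem_iff <| hfinv.mono fun x hx q hq => by
      simp only [mem_preimage, hx q hq]
  obtain ⟨c, hc⟩ := exists_singleton_mem_of_isOpen_or_compl_mem hdich
  exact ⟨c, eventually_residual_inf_principal_iff.mp hc⟩
end

section
/- Let V ⊆ (0,∞) be a nonempty open interval and f : (0,∞) → ℝ Lebesgue-measurable. Suppose sup{ |f(qx)| : q ∈ ℚ, q > 0 } < ∞ for each x ∈ V. Then f is essentially bounded at infinity: there exist M and n₀ such that for all n ≥ n₀, the essential supremum of |f| on (n,∞) is at most M. -/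
/-!
Split `Ioo a b` according to the bound `N ∈ ℕ` of `q ↦ |f (q x)|`; by countable additivity one
piece `S` has positive measure. If `{t > 0 | N < |f t|}` had positive measure too, some rational
dilate of `S` would meet it, which is absurd. Rational dilates are translates by the dense set
`log ℚ₊` in logarithmic coordinates, and for two sets `E`, `B` of positive measure `B - E` has
nonempty interior: around Lebesgue density points `e ∈ E`, `b ∈ B`, both sets fill more than
three quarters of small intervals, so translates of them by about `b - e` cannot be disjoint.
-/

open MeasureTheory Filter Set Topology Metric
open scoped Pointwise

lemma exists_mem_eventually_volume_inter_closedBall_gt {S : Set ℝ} (hS : MeasurableSet S)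
    (hS₀ : volume S ≠ 0) :
    ∃ x ∈ S, ∀ᶠ r in 𝓝[>] 0, ENNReal.ofReal (3 / 2 * r) < volume (S ∩ closedBall x r) := by
  obtain ⟨x, hxS, hx⟩ := Measure.exists_mem_of_measure_ne_zero_of_ae hS₀
    (ae_restrict_of_ae (Besicovitch.ae_tendsto_measure_inter_div_of_measurableSet volume hS))
  rw [indicator_of_mem hxS, Pi.one_apply] at hx
  have h34 : ENNReal.ofReal (3 / 4) < 1 := by norm_num
  refine ⟨x, hxS, ?_⟩
  filter_upwards [hx.eventually (eventually_gt_nhds h34), self_mem_nhdsWithin]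
    with r hr (hr₀ : 0 < r)
  rw [Real.volume_closedBall, ENNReal.lt_div_iff_mul_lt (by simp [hr₀]) (by simp),
    ← ENNReal.ofReal_mul (by norm_num)] at hr
  convert hr using 2
  ring

lemma nonempty_interior_sub_of_volume_ne_zero {E B : Set ℝ} (hE : MeasurableSet E)
    (hB : MeasurableSet B) (hE₀ : volume E ≠ 0) (hB₀ : volume B ≠ 0) :
    (interior (B - E)).Nonempty := by
  obtain ⟨e, -, he⟩ := exists_mem_eventually_volume_inter_closedBall_gt hE hE₀
  obtain ⟨b, -, hb⟩ := exists_mem_eventually_volume_inter_closedBall_gt hB hB₀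
  obtain ⟨r, ⟨hEr, hBr⟩, hr : 0 < r⟩ := ((he.and hb).and self_mem_nhdsWithin).exists
  suffices Ioo (b - e - r / 2) (b - e + r / 2) ⊆ B - E from
    (nonempty_Ioo.2 (by linarith)).mono (isOpen_Ioo.subset_interior_iff.2 this)
  intro d hd
  set A := (· + -d) ⁻¹' (E ∩ closedBall e r)
  have hAK : A ⊆ closedBall b (3 / 2 * r) := by
    intro y ⟨_, hy⟩
    rw [mem_closedBall, Real.dist_eq, abs_le] at hy ⊢
    constructor <;> linarith [hd.1, hd.2]
  have hBK : B ∩ closedBall b r ⊆ closedBall b (3 / 2 * r) :=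
    inter_subset_right.trans (closedBall_subset_closedBall (by linarith))
  have hvol : volume (closedBall b (3 / 2 * r)) < volume A + volume (B ∩ closedBall b r) := by
    rw [measure_preimage_add_right, Real.volume_closedBall,
      show 2 * (3 / 2 * r) = 3 / 2 * r + 3 / 2 * r by ring,
      ENNReal.ofReal_add (by positivity) (by positivity)]
    exact ENNReal.add_lt_add hEr hBr
  obtain ⟨y, ⟨hyE, -⟩, hyB, -⟩ :=
    nonempty_inter_of_measure_lt_add volume (hB.inter measurableSet_closedBall) hAK hBK hvol
  exact ⟨y, hyB, y + -d, hyE, by ring⟩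

lemma dense_log_rat : Dense {t : ℝ | ∃ q : ℚ, 0 < q ∧ Real.log q = t} :=
  dense_of_exists_between fun u v huv => by
    obtain ⟨q, hu, hv⟩ := exists_rat_btwn (Real.exp_lt_exp.2 huv)
    have hq : (0 : ℝ) < q := (Real.exp_pos u).trans hu
    exact ⟨Real.log q, ⟨q, by exact_mod_cast hq, rfl⟩,
      (Real.lt_log_iff_exp_lt hq).2 hu, (Real.log_lt_iff_lt_exp hq).2 hv⟩

lemma volume_preimage_exp_ne_zero {S : Set ℝ} (hS : S ⊆ Ioi 0) (hS₀ : volume S ≠ 0) :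
    volume (Real.exp ⁻¹' S) ≠ 0 := by
  intro h
  have := addHaar_image_eq_zero_of_differentiableOn_of_addHaar_eq_zero volume
    Real.differentiable_exp.differentiableOn h
  rw [image_preimage_eq_of_subset (Real.range_exp ▸ hS)] at this
  exact hS₀ this

theorem exists_rat_mul_mem_of_volume_ne_zero {S B : Set ℝ} (hS : MeasurableSet S)
    (hB : MeasurableSet B) (hS_pos : S ⊆ Ioi 0) (hB_pos : B ⊆ Ioi 0) (hS₀ : volume S ≠ 0)
    (hB₀ : volume B ≠ 0) : ∃ q : ℚ, 0 < q ∧ ∃ x ∈ S, (q : ℝ) * x ∈ B := by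
  obtain ⟨_, ⟨q, hq, rfl⟩, hqU⟩ := dense_log_rat.exists_mem_open isOpen_interior
    (nonempty_interior_sub_of_volume_ne_zero (hS.preimage Real.measurable_exp)
      (hB.preimage Real.measurable_exp) (volume_preimage_exp_ne_zero hS_pos hS₀)
      (volume_preimage_exp_ne_zero hB_pos hB₀))
  obtain ⟨t, ht, s, hs, hts⟩ := interior_subset hqU
  refine ⟨q, hq, Real.exp s, hs, ?_⟩
  rwa [← Real.exp_log (show (0 : ℝ) < q by exact_mod_cast hq), ← Real.exp_add, ← hts,
    sub_add_cancel]

theorem stmt_15 (f : ℝ → ℝ) (hf : Measurable f)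
    (a b : ℝ) (ha : 0 < a) (hab : a < b)
    (hbd : ∀ x ∈ Ioo a b, ∃ C : ℝ, ∀ q : ℚ, 0 < q → |f ((q : ℝ) * x)| ≤ C) :
    ∃ (M : ℝ) (n₀ : ℕ), ∀ n : ℕ, n₀ ≤ n →
      ∀ᵐ t ∂(volume.restrict (Ioi (n : ℝ))), |f t| ≤ M := by
  set S : ℕ → Set ℝ := fun N => Ioo a b ∩ ⋂ (q : ℚ) (_ : 0 < q), {x | |f (q * x)| ≤ N}
  have hS : ∀ N, MeasurableSet (S N) := fun N => measurableSet_Ioo.inter <|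
    .iInter fun q => .iInter fun _ =>
      measurableSet_le (hf.comp (measurable_const_mul _)).abs measurable_const
  have hcover : Ioo a b ⊆ ⋃ N, S N := fun x hx => by
    obtain ⟨C, hC⟩ := hbd x hx
    exact mem_iUnion.2 ⟨⌈C⌉₊, hx, mem_iInter₂.2 fun q hq => (hC q hq).trans (Nat.le_ceil C)⟩
  obtain ⟨N, hN⟩ := exists_measure_pos_of_not_measure_iUnion_null fun h =>
    (Real.volume_Ioo ▸ ENNReal.ofReal_pos.2 (sub_pos.2 hab)).ne' (measure_mono_null hcover h)
  have hbad : volume (Ioi 0 ∩ {t | (N : ℝ) < |f t|}) = 0 := by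
    by_contra hB₀
    obtain ⟨q, hq, x, hx, -, hqx : (N : ℝ) < |f (q * x)|⟩ :=
      exists_rat_mul_mem_of_volume_ne_zero (hS N)
        (measurableSet_Ioi.inter (measurableSet_lt measurable_const hf.abs))
        (fun x hx => ha.trans hx.1.1) inter_subset_left hN.ne' hB₀
    exact (mem_iInter₂.1 hx.2 q hq).not_gt hqx
  refine ⟨N, 0, fun n _ => ae_restrict_of_ae_restrict_of_subset
    (Ioi_subset_Ioi n.cast_nonneg) ((ae_restrict_iff' measurableSet_Ioi).2 ?_)⟩
  filter_upwards [measure_eq_zero_iff_ae_notMem.1 hbad] with t ht ht₀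
  exact not_lt.1 fun h => ht ⟨ht₀, h⟩
end

section
/- Let G = ⋃_{m=1}^∞ (m − 2^{−(m+2)}, m) and let F = [1/2, 1] \ ⋃_{m=1}^∞ ⋃_{n=m}^{2m−1} (m/n − 2^{−(m+2)}/n, m/n). Then F is a closed subset of [1/2,1] of Lebesgue measure at least 1/4, and for every positive integer n the dilation n·F = {nx : x ∈ F} is disjoint from G. -/
open MeasureTheory Set

/-!
If `n x` lies in the gap `(m + 1 - c m, m + 1)` with `x ∈ [1/2, 1]` and `c m ≤ 1`, then
`m + 1 ≤ n ≤ 2m + 1`, so `x` lies in one of the intervals `((m + 1 - c m) / n, (m + 1) / n)`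
removed from `[1/2, 1]`. For fixed `m` these are `m + 1` intervals of length at most
`c m / (m + 1)`, so the removed set has measure at most `∑ c m = 1/4`.
-/

def integerGaps (c : ℕ → ℝ) : Set ℝ :=
  ⋃ m : ℕ, Ioo ((m + 1 : ℝ) - c m) (m + 1)

def scaledIntegerGaps (c : ℕ → ℝ) : Set ℝ :=
  ⋃ (m : ℕ) (n : ℕ) (_ : m + 1 ≤ n) (_ : n ≤ 2 * (m + 1) - 1),
    Ioo (((m : ℝ) + 1) / n - c m / n) (((m : ℝ) + 1) / n)

theorem isOpen_scaledIntegerGaps (c : ℕ → ℝ) : IsOpen (scaledIntegerGaps c) :=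
  isOpen_iUnion fun _ => isOpen_iUnion fun _ => isOpen_iUnion fun _ =>
    isOpen_iUnion fun _ => isOpen_Ioo

theorem volume_iUnion_Ioo_div_le (m : ℕ) {c : ℝ} (hc : 0 ≤ c) :
    volume (⋃ (n : ℕ) (_ : m + 1 ≤ n) (_ : n ≤ 2 * (m + 1) - 1),
      Ioo (((m : ℝ) + 1) / n - c / n) (((m : ℝ) + 1) / n)) ≤ ENNReal.ofReal c := by
  have hunion : (⋃ (n : ℕ) (_ : m + 1 ≤ n) (_ : n ≤ 2 * (m + 1) - 1),
      Ioo (((m : ℝ) + 1) / n - c / n) (((m : ℝ) + 1) / n)) =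
      ⋃ n ∈ Finset.Icc (m + 1) (2 * m + 1),
        Ioo (((m : ℝ) + 1) / n - c / n) (((m : ℝ) + 1) / n) := by
    ext x
    simp only [mem_iUnion, Finset.mem_Icc, exists_prop]
    constructor
    · rintro ⟨n, h₁, h₂, hx⟩; exact ⟨n, ⟨h₁, by omega⟩, hx⟩
    · rintro ⟨n, ⟨h₁, h₂⟩, hx⟩; exact ⟨n, h₁, by omega, hx⟩
  have hterm : ∀ n ∈ Finset.Icc (m + 1) (2 * m + 1),
      volume (Ioo (((m : ℝ) + 1) / n - c / n) (((m : ℝ) + 1) / n)) ≤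
        ENNReal.ofReal (c / (m + 1)) := by
    intro n hn
    have hmn : (m : ℝ) + 1 ≤ n := by exact_mod_cast (Finset.mem_Icc.mp hn).1
    rw [Real.volume_Ioo, sub_sub_cancel]
    exact ENNReal.ofReal_le_ofReal (div_le_div_of_nonneg_left hc (by positivity) hmn)
  calc _ ≤ ∑ n ∈ Finset.Icc (m + 1) (2 * m + 1),
        volume (Ioo (((m : ℝ) + 1) / n - c / n) (((m : ℝ) + 1) / n)) :=
        hunion ▸ measure_biUnion_finset_le _ _
    _ ≤ (m + 1) • ENNReal.ofReal (c / (m + 1)) := by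
        simpa [Nat.card_Icc, show 2 * m + 1 + 1 - (m + 1) = m + 1 by omega] using
          Finset.sum_le_card_nsmul _ _ _ hterm
    _ = ENNReal.ofReal c := by
        rw [nsmul_eq_mul, ← ENNReal.ofReal_natCast, ← ENNReal.ofReal_mul (by positivity)]
        congr 1
        push_cast
        field_simp

theorem volume_scaledIntegerGaps_le {c : ℕ → ℝ} (hc : ∀ m, 0 ≤ c m) :
    volume (scaledIntegerGaps c) ≤ ∑' m, ENNReal.ofReal (c m) :=
  (measure_iUnion_le _).trans (ENNReal.tsum_le_tsum fun m => volume_iUnion_Ioo_div_le m (hc m))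

theorem mem_scaledIntegerGaps_of_mul_mem_integerGaps {c : ℕ → ℝ} (hc : ∀ m, c m ≤ 1)
    {x : ℝ} (hx : x ∈ Icc (1 / 2 : ℝ) 1) {n : ℕ} (hn : 0 < n)
    (hnx : (n : ℝ) * x ∈ integerGaps c) : x ∈ scaledIntegerGaps c := by
  obtain ⟨m, hlo, hhi⟩ := mem_iUnion.mp hnx
  have hn' : (0 : ℝ) < n := by exact_mod_cast hn
  have hmn : m + 1 ≤ n := by
    have : (m : ℝ) < n := by nlinarith [hc m, hx.2]
    exact_mod_cast this
  have hn2m : n ≤ 2 * (m + 1) - 1 := by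
    have : (n : ℝ) < 2 * (m + 1) := by nlinarith [hx.1]
    have : n < 2 * (m + 1) := by exact_mod_cast this
    omega
  simp only [scaledIntegerGaps, mem_iUnion]
  refine ⟨m, n, hmn, hn2m, ?_, ?_⟩
  · rw [div_sub_div_same, div_lt_iff₀ hn']; linarith
  · rw [lt_div_iff₀ hn']; linarith

theorem hasSum_two_zpow_neg_add_three :
    HasSum (fun m : ℕ => (2 : ℝ) ^ (-((m : ℤ) + 3))) (1 / 4) := by
  convert hasSum_geometric_two' (1 / 4) using 2 with m
  rw [zpow_neg, zpow_add₀ two_ne_zero]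
  norm_num
  ring

theorem stmt_16
    (G : Set ℝ) (hG : G = ⋃ m : ℕ, Ioo ((m + 1 : ℝ) - 2 ^ (-((m : ℤ) + 3))) (m + 1))
    (F : Set ℝ)
    (hF : F = Icc (1/2 : ℝ) 1 \
      ⋃ (m : ℕ) (n : ℕ) (_ : m + 1 ≤ n) (_ : n ≤ 2 * (m + 1) - 1),
        Ioo (((m : ℝ) + 1) / n - 2 ^ (-((m : ℤ) + 3)) / n) (((m : ℝ) + 1) / n)) :
    IsClosed F ∧ F ⊆ Icc (1/2 : ℝ) 1 ∧ ENNReal.ofReal (1/4) ≤ volume F ∧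
    ∀ n : ℕ, 0 < n → Disjoint ((fun x => (n : ℝ) * x) '' F) G := by
  set c : ℕ → ℝ := fun m => 2 ^ (-((m : ℤ) + 3))
  change G = integerGaps c at hG
  change F = Icc (1/2 : ℝ) 1 \ scaledIntegerGaps c at hF
  subst hG hF
  have hc_sum : HasSum c (1 / 4) := hasSum_two_zpow_neg_add_three
  have hc_nonneg : ∀ m, 0 ≤ c m := fun m => by positivity
  have hc_le_one : ∀ m, c m ≤ 1 := fun m => zpow_le_one_of_nonpos₀ one_le_two (by omega)
  refine ⟨isClosed_Icc.sdiff (isOpen_scaledIntegerGaps c), sdiff_subset, ?_, ?_⟩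
  · have hgaps : volume (scaledIntegerGaps c) ≤ ENNReal.ofReal (1 / 4) := by
      rw [← hc_sum.tsum_eq, ENNReal.ofReal_tsum_of_nonneg hc_nonneg hc_sum.summable]
      exact volume_scaledIntegerGaps_le hc_nonneg
    calc ENNReal.ofReal (1 / 4) = volume (Icc (1 / 2 : ℝ) 1) - ENNReal.ofReal (1 / 4) := by
          rw [Real.volume_Icc, ← ENNReal.ofReal_sub _ (by norm_num)]; norm_num
      _ ≤ volume (Icc (1 / 2 : ℝ) 1) - volume (scaledIntegerGaps c) := tsub_le_tsub_left hgaps _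
      _ ≤ _ := le_measure_sdiff
  · intro n hn
    rw [disjoint_left]
    rintro _ ⟨x, ⟨hx, hx_gaps⟩, rfl⟩ hnx
    exact hx_gaps (mem_scaledIntegerGaps_of_mul_mem_integerGaps hc_le_one hx hn hnx)
end

section
/- Let T ⊆ ℝ be Lebesgue-measurable with positive measure (respectively: Baire non-meagre), let (zₙ) be a sequence of reals converging to 0, and let p ∈ ℕ. Then for almost every (resp. quasi every) t ∈ T there is an infinite set M ⊆ ℕ such that for every m ∈ M the whole block t + z_{pm+1}, t + z_{pm+2}, …, t + z_{pm+p} lies in T. -/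
/-!
Translation is continuous in measure: for `S` of finite measure, `μ (S \ (S - z)) → 0` as
`z → 0`. Hence the points of `S` that miss the `m`-th block `t + z_{pm+1}, …, t + z_{pm+p}`
form sets of measure tending to `0`, and a point missing all blocks from some `k` on lies in
sets of arbitrarily small measure; σ-finiteness passes from `S` to `T`. In the Baire case `T`
agrees with an open set `U` off a meagre set; off the countably many translates of that meagre
set, every `t ∈ T` has `t + z_j ∈ U`, hence `t + z_j ∈ T`, for all large `j`.
-/

open MeasureTheory Filter Set Topology

open scoped ENNReal

section Translation

variable {ι G : Type*} [AddGroup G] [TopologicalSpace G] [IsTopologicalAddGroup G]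

theorem tendsto_measure_diff_preimage_add_right [MeasurableSpace G] [BorelSpace G]
    {μ : Measure G} [μ.IsAddRightInvariant] [μ.InnerRegularCompactLTTop]
    [IsLocallyFiniteMeasure μ] {l : Filter ι} {z : ι → G} (hz : Tendsto z l (𝓝 0))
    {s : Set G} (hs : NullMeasurableSet s μ) (hμs : μ s ≠ ∞) :
    Tendsto (fun j => μ (s \ (· + z j) ⁻¹' s)) l (𝓝 0) := by
  have hcont : Continuous (ContinuousMap.addRight : G → C(G, G)) :=
    ContinuousMap.continuous_of_continuous_uncurry _ (continuous_snd.add continuous_fst)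
  have hsymm := tendsto_measure_symmDiff_preimage_nhds_zero ((hcont.tendsto 0).comp hz)
    (.of_forall fun j => measurePreserving_add_right μ (z j)) (measurePreserving_add_right μ 0)
    hs hμs
  simp only [Function.comp_apply, ContinuousMap.coe_addRight, add_zero, preimage_id'] at hsymm
  exact tendsto_of_tendsto_of_tendsto_of_le_of_le tendsto_const_nhds hsymm (fun _ => zero_le)
    fun j => measure_mono (le_sup_right.trans_eq (symmDiff_def _ _).symm)

theorem exists_isMeagre_forall_eventually_add_mem [Countable ι] {l : Filter ι} {z : ι → G}
    (hz : Tendsto z l (𝓝 0)) {T : Set G} (hT : BaireMeasurableSet T) :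
    ∃ N : Set G, IsMeagre N ∧ ∀ t ∈ T \ N, ∀ᶠ j in l, t + z j ∈ T := by
  obtain ⟨U, hUo, hTU⟩ := hT.residualEq_isOpen
  set D : Set G := {x | ¬(x ∈ T ↔ x ∈ U)}
  have hD : IsMeagre D := by
    show Dᶜ ∈ residual G
    filter_upwards [eventuallyEq_set.mp hTU] with x hx
    simpa [D] using hx
  refine ⟨(T \ U) ∪ ⋃ j, (· + z j) ⁻¹' D, ?_, ?_⟩
  · refine (hD.mono fun x hx => ?_).union (isMeagre_iUnion fun j => ?_)
    · simp_all [D]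
    · exact hD.preimage_of_isOpenMap (continuous_add_const _) (Homeomorph.addRight (z j)).isOpenMap
  · rintro t ⟨htT, htN⟩
    rw [mem_union, mem_iUnion, not_or, not_exists] at htN
    have htU : t ∈ U := by_contra fun h => htN.1 ⟨htT, h⟩
    filter_upwards [(tendsto_const_nhds.add hz).eventually (hUo.mem_nhds (by simpa using htU))]
      with j (hj : t + z j ∈ U)
    by_contra h
    exact htN.2 j (by simp [D, h, hj])

end Translation

theorem ae_frequently_mem_of_tendsto_measure_diff {α : Type*} [MeasurableSpace α]
    {μ : Measure α} {s : Set α} {A : ℕ → Set α}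
    (h : Tendsto (fun m => μ (s \ A m)) atTop (𝓝 0)) :
    ∀ᵐ x ∂μ, x ∈ s → ∃ᶠ m in atTop, x ∈ A m := by
  have hnull : μ (s \ limsup A atTop) = 0 := by
    rw [limsup_eq_iInf_iSup_of_nat, iInf_eq_iInter, sdiff_iInter]
    refine measure_iUnion_null fun k => le_antisymm (ge_of_tendsto h ?_) zero_le
    filter_upwards [eventually_ge_atTop k] with m hm
    exact measure_mono (sdiff_subset_sdiff_right (subset_biUnion_of_mem hm))
  refine ae_iff.2 (measure_mono_null (fun x hx => ?_) hnull)
  rw [mem_ofPred_eq, Classical.not_imp] at hx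
  exact ⟨hx.1, mt mem_limsup_iff_frequently_mem.mp hx.2⟩

section Blocks

variable {G : Type*} [AddGroup G]

def blockSet (T : Set G) (z : ℕ → G) (p m : ℕ) : Set G :=
  ⋂ i ∈ Finset.Icc 1 p, (· + z (p * m + i)) ⁻¹' T

theorem blockSet_mono {T T' : Set G} (h : T ⊆ T') (z : ℕ → G) (p m : ℕ) :
    blockSet T z p m ⊆ blockSet T' z p m :=
  biInter_mono subset_rfl fun _ _ => preimage_mono h

theorem tendsto_block_index {p i : ℕ} (hi : i ∈ Finset.Icc 1 p) :
    Tendsto (fun m => p * m + i) atTop atTop := by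
  have hp : 0 < p := by grind
  exact tendsto_atTop_mono (fun m => (Nat.le_mul_of_pos_left m hp).trans (Nat.le_add_right _ _))
    tendsto_id

theorem eventually_mem_blockSet {T : Set G} {z : ℕ → G} {t : G}
    (h : ∀ᶠ j in atTop, t + z j ∈ T) (p : ℕ) : ∀ᶠ m in atTop, t ∈ blockSet T z p m := by
  simp only [blockSet, mem_iInter₂, mem_preimage]
  exact (Finset.eventually_all _).2 fun i hi => (tendsto_block_index hi).eventually h

theorem exists_infinite_of_frequently_mem_blockSet {T : Set G} {z : ℕ → G} {p : ℕ} {t : G}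
    (h : ∃ᶠ m in atTop, t ∈ blockSet T z p m) :
    ∃ M : Set ℕ, M.Infinite ∧ ∀ m ∈ M, ∀ i : ℕ, 1 ≤ i → i ≤ p → t + z (p * m + i) ∈ T :=
  ⟨{m | t ∈ blockSet T z p m}, Nat.frequently_atTop_iff_infinite.mp h,
    fun _ hm i hi hip => mem_iInter₂.mp hm i (Finset.mem_Icc.mpr ⟨hi, hip⟩)⟩

theorem tendsto_measure_diff_blockSet [TopologicalSpace G] [IsTopologicalAddGroup G]
    [MeasurableSpace G] [BorelSpace G] {μ : Measure G} [μ.IsAddRightInvariant]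
    [μ.InnerRegularCompactLTTop] [IsLocallyFiniteMeasure μ] {z : ℕ → G}
    (hz : Tendsto z atTop (𝓝 0)) {s : Set G} (hs : NullMeasurableSet s μ) (hμs : μ s ≠ ∞)
    (p : ℕ) : Tendsto (fun m => μ (s \ blockSet s z p m)) atTop (𝓝 0) := by
  have hshift := tendsto_measure_diff_preimage_add_right hz hs hμs
  have hsum : Tendsto (fun m => ∑ i ∈ Finset.Icc 1 p, μ (s \ (· + z (p * m + i)) ⁻¹' s))
      atTop (𝓝 0) := by
    simpa using tendsto_finsetSum _ fun i hi => hshift.comp (tendsto_block_index hi)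
  refine tendsto_of_tendsto_of_tendsto_of_le_of_le tendsto_const_nhds hsum (fun _ => zero_le)
    fun m => ?_
  simp only [blockSet, sdiff_iInter]
  exact measure_biUnion_finset_le _ _

theorem ae_frequently_mem_blockSet [TopologicalSpace G] [IsTopologicalAddGroup G]
    [MeasurableSpace G] [BorelSpace G] {μ : Measure G} [μ.IsAddRightInvariant]
    [μ.InnerRegularCompactLTTop] [IsLocallyFiniteMeasure μ] [SigmaFinite μ] {z : ℕ → G}
    (hz : Tendsto z atTop (𝓝 0)) {T : Set G} (hT : NullMeasurableSet T μ) (p : ℕ) :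
    ∀ᵐ t ∂μ, t ∈ T → ∃ᶠ m in atTop, t ∈ blockSet T z p m := by
  have hpiece (n : ℕ) := ae_frequently_mem_of_tendsto_measure_diff <|
    tendsto_measure_diff_blockSet hz (hT.inter (measurableSet_spanningSets μ n).nullMeasurableSet)
      ((measure_mono inter_subset_right).trans_lt (measure_spanningSets_lt_top μ n)).ne p
  filter_upwards [ae_all_iff.2 hpiece] with t ht htT
  exact (ht _ ⟨htT, mem_spanningSetsIndex μ t⟩).mono fun m hm =>
    blockSet_mono inter_subset_left z p m hm

end Blocks

theorem stmt_18_general (T : Set ℝ) (z : ℕ → ℝ) (hz : Tendsto z atTop (𝓝 0)) (p : ℕ) :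
    (MeasurableSet T → 0 < volume T →
      ∃ N : Set ℝ, volume N = 0 ∧ ∀ t ∈ T \ N,
        ∃ M : Set ℕ, M.Infinite ∧ ∀ m ∈ M, ∀ i : ℕ, 1 ≤ i → i ≤ p →
          t + z (p * m + i) ∈ T) ∧
    (BaireMeasurableSet T → ¬ IsMeagre T →
      ∃ N : Set ℝ, IsMeagre N ∧ ∀ t ∈ T \ N,
        ∃ M : Set ℕ, M.Infinite ∧ ∀ m ∈ M, ∀ i : ℕ, 1 ≤ i → i ≤ p →
          t + z (p * m + i) ∈ T) := by
  refine ⟨fun hT _ => ?_, fun hT _ => ?_⟩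
  · have hae := ae_frequently_mem_blockSet (μ := volume) hz hT.nullMeasurableSet p
    exact ⟨_, ae_iff.1 hae, fun t ⟨htT, ht⟩ =>
      exists_infinite_of_frequently_mem_blockSet (not_not.1 ht htT)⟩
  · obtain ⟨N, hN, hev⟩ := exists_isMeagre_forall_eventually_add_mem hz hT
    exact ⟨N, hN, fun t ht =>
      exists_infinite_of_frequently_mem_blockSet (eventually_mem_blockSet (hev t ht) p).frequently⟩

theorem stmt_18 (T : Set ℝ) (z : ℕ → ℝ) (hz : Tendsto z atTop (𝓝 0)) (p : ℕ) (hp : 0 < p) :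
    (MeasurableSet T → 0 < volume T →
      ∃ N : Set ℝ, volume N = 0 ∧ ∀ t ∈ T \ N,
        ∃ M : Set ℕ, M.Infinite ∧ ∀ m ∈ M, ∀ i : ℕ, 1 ≤ i → i ≤ p →
          t + z (p * m + i) ∈ T) ∧
    (BaireMeasurableSet T → ¬ IsMeagre T →
      ∃ N : Set ℝ, IsMeagre N ∧ ∀ t ∈ T \ N,
        ∃ M : Set ℕ, M.Infinite ∧ ∀ m ∈ M, ∀ i : ℕ, 1 ≤ i → i ≤ p →
          t + z (p * m + i) ∈ T) :=
  stmt_18_general T z hz p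
end
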